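/- arXiv:2512.10827 — 6 statements merged into one kernel-verified Lean document; each statement's English description precedes it below -/
import Mathlib

section
/- Let k ≥ 2 be an integer, let F be a linear forest each of whose components is a path of length 2, 3, or 4 (i.e., a path on 3, 4, or 5 vertices), and let B be a set of pairwise disjoint 2-element subsets of V(F). Suppose F has an edge-k-coloring φ such that for every vertex v ∈ V(F) there is a set B_φ(v) of at most 2·C(k, d_F(v)) − 2 vertices of F, all having the same degree in F as v, such that φ(u) ≠ φ(v) for every u ∈ B_φ(v). Then there is an edge-⌊3.5k + 1⌋-coloring ψ of F such that ψ(u) ≠ ψ(v) for each pair {u,v} ∈ B, and ψ(u) ≠ ψ(v) for each vertex v ∈ V(F) and each u ∈ B_φ(v). -/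
/-- `φ` is a proper edge-`k`-coloring of `G`: every edge gets a color in `{1,…,k}` and
adjacent (distinct, sharing a vertex) edges get different colors. -/
def IsEdgeKColoring {V : Type*} (G : SimpleGraph V) (k : ℕ) (φ : Sym2 V → ℕ) : Prop :=
  (∀ e ∈ G.edgeSet, φ e ∈ Finset.Icc 1 k) ∧
  ∀ e₁ ∈ G.edgeSet, ∀ e₂ ∈ G.edgeSet, e₁ ≠ e₂ → (∃ v : V, v ∈ e₁ ∧ v ∈ e₂) → φ e₁ ≠ φ e₂

/-- The color-set of a vertex `v`: the set of colors appearing on edges incident with `v`. -/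
def colorSet {V : Type*} (G : SimpleGraph V) (φ : Sym2 V → ℕ) (v : V) : Set ℕ :=
  {c | ∃ e ∈ G.edgeSet, v ∈ e ∧ φ e = c}

/-- `H` is (isomorphic to) a path on `n` vertices. -/
def IsPathOn {W : Type*} (H : SimpleGraph W) (n : ℕ) : Prop :=
  Nonempty (H ≃g SimpleGraph.pathGraph n)

/-- Every component of `F` is a path of length 2, 3, or 4 (on 3, 4 or 5 vertices). -/
def IsShortPathForest {V : Type*} (F : SimpleGraph V) : Prop :=
  ∀ c : F.ConnectedComponent,
    IsPathOn (F.induce c.supp) 3 ∨ IsPathOn (F.induce c.supp) 4 ∨ IsPathOn (F.induce c.supp) 5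

lemma greedy_fin : ∀ (n : ℕ) (R : Fin n → Fin n → Prop) [DecidableRel R],
    (∀ a b, R a b → R b a) → (∀ a, ¬ R a a) →
    (∀ a, (Finset.univ.filter (fun b => R a b)).card ≤ 2) →
    ∃ ℓ : Fin n → Fin 3, ∀ a b, R a b → ℓ a ≠ ℓ b := by
  intro n
  induction n with
  | zero => exact fun R _ _ _ _ => ⟨fun a => a.elim0, fun a => a.elim0⟩
  | succ n ih =>
    intro R _ hsym hirr hdeg
    have hdeg' : ∀ a : Fin (n+1), ∀ s : Finset (Fin n),
        (∀ b ∈ s, R a b.castSucc) → s.card ≤ 2 := by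
      intro a s hs
      refine le_trans (Finset.card_le_card_of_injOn Fin.castSucc
        (fun b hb => Finset.mem_filter.2 ⟨Finset.mem_univ _, hs b hb⟩)
        ((Fin.castSucc_injective n).injOn)) (hdeg a)
    obtain ⟨ℓ', hℓ'⟩ := ih (fun a b => R a.castSucc b.castSucc)
      (fun a b h => hsym _ _ h) (fun a h => hirr _ h)
      (fun a => hdeg' a.castSucc _ (fun b hb => (Finset.mem_filter.1 hb).2))
    set T : Finset (Fin 3) :=
      (Finset.univ.filter (fun b : Fin n => R (Fin.last n) b.castSucc)).image ℓ' with hT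
    have hTcard : T.card ≤ 2 :=
      le_trans Finset.card_image_le (hdeg' (Fin.last n) _ (fun b hb => (Finset.mem_filter.1 hb).2))
    obtain ⟨c, hc⟩ : ∃ c : Fin 3, c ∉ T := by
      by_contra h
      push_neg at h
      have h2 := Finset.card_le_card (fun c _ => h c : (Finset.univ : Finset (Fin 3)) ⊆ T)
      simp at h2
      omega
    refine ⟨fun a => if h : a = Fin.last n then c else ℓ' (a.castPred h), ?_⟩
    intro a b hR heq
    by_cases ha : a = Fin.last n <;> by_cases hb : b = Fin.last n
    · exact hirr _ (ha ▸ hb ▸ hR)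
    · simp only [ha, dif_pos, dif_neg hb] at heq
      apply hc
      rw [hT]
      refine Finset.mem_image.2 ⟨b.castPred hb, Finset.mem_filter.2 ⟨Finset.mem_univ _, ?_⟩, heq.symm⟩
      rwa [Fin.castSucc_castPred, ← ha]
    · simp only [hb, dif_pos, dif_neg ha] at heq
      apply hc
      rw [hT]
      refine Finset.mem_image.2 ⟨a.castPred ha, Finset.mem_filter.2 ⟨Finset.mem_univ _, ?_⟩, heq⟩
      rw [Fin.castSucc_castPred]
      exact hb ▸ hsym _ _ hR
    · simp only [dif_neg ha, dif_neg hb] at heq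
      exact hℓ' (a.castPred ha) (b.castPred hb)
        (by rwa [Fin.castSucc_castPred, Fin.castSucc_castPred]) heq

lemma greedy_three {E : Type*} [Fintype E] (R : E → E → Prop)
    (hsym : ∀ a b, R a b → R b a) (hirr : ∀ a, ¬ R a a)
    (hdeg : ∀ a b₁ b₂ b₃ : E, R a b₁ → R a b₂ → R a b₃ → b₁ = b₂ ∨ b₁ = b₃ ∨ b₂ = b₃) :
    ∃ ℓ : E → Fin 3, ∀ a b, R a b → ℓ a ≠ ℓ b := by
  classical
  set q := Fintype.equivFin E with hq
  set R' : Fin (Fintype.card E) → Fin (Fintype.card E) → Prop :=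
    fun i j => R (q.symm i) (q.symm j) with hR'
  have hdeg' : ∀ i, (Finset.univ.filter (fun j => R' i j)).card ≤ 2 := by
    intro i
    by_contra h
    push_neg at h
    obtain ⟨a, b, c, ha, hb, hc, hab, hac, hbc⟩ := Finset.two_lt_card_iff.1 h
    have ha' := (Finset.mem_filter.1 ha).2
    have hb' := (Finset.mem_filter.1 hb).2
    have hc' := (Finset.mem_filter.1 hc).2
    rcases hdeg _ _ _ _ ha' hb' hc' with h | h | h
    · exact hab (by simpa using congrArg q h)
    · exact hac (by simpa using congrArg q h)
    · exact hbc (by simpa using congrArg q h)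
  obtain ⟨ℓ, hℓ⟩ := greedy_fin (Fintype.card E) R' (fun a b h => hsym _ _ h)
    (fun a h => hirr _ h) hdeg'
  refine ⟨fun e => ℓ (q e), fun a b h hab => ?_⟩
  exact hℓ (q a) (q b) (by simpa [hR'] using h) hab

/-- arithmetic injectivity of the shifted coloring -/
lemma shift_inj (k a b l m : ℕ) (ha1 : 1 ≤ a) (hak : a ≤ k) (hb1 : 1 ≤ b) (hbk : b ≤ k)
    (hl : l < 3) (hm : m < 3) (h : a + k * l = b + k * m) : a = b ∧ l = m := by
  interval_cases l <;> interval_cases m <;> omega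

/-- Lemma 5 (coloring linear forests): if a linear forest `F` whose components are paths on
3, 4 or 5 vertices has an edge-`k`-coloring `φ` distinguishing each `v` from a prescribed set
`Bφ v` of at most `2·C(k, d_F(v)) − 2` vertices of the same degree, and `B` is a set of
pairwise disjoint `2`-element subsets of `V(F)`, then `F` has an edge-`⌊3.5k+1⌋`-coloring `ψ`
distinguishing the two vertices of each pair of `B` and distinguishing each `v` from every
vertex of `Bφ v`. -/
theorem color_short_path_forest {V : Type*} [Fintype V]
    (k : ℕ) (hk : 2 ≤ k)
    (F : SimpleGraph V) [DecidableRel F.Adj] (hF : IsShortPathForest F)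
    (B : Set (Finset V)) (hB2 : ∀ p ∈ B, p.card = 2)
    (hBdisj : ∀ p ∈ B, ∀ q ∈ B, p ≠ q → Disjoint p q)
    (φ : Sym2 V → ℕ) (hφ : IsEdgeKColoring F k φ)
    (Bφ : V → Finset V)
    (hBφcard : ∀ v : V, (Bφ v).card ≤ 2 * k.choose (F.degree v) - 2)
    (hBφdeg : ∀ v : V, ∀ u ∈ Bφ v, F.degree u = F.degree v)
    (hBφdist : ∀ v : V, ∀ u ∈ Bφ v, colorSet F φ u ≠ colorSet F φ v) :
    ∃ ψ : Sym2 V → ℕ, IsEdgeKColoring F ((7 * k + 2) / 2) ψ ∧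
      (∀ p ∈ B, ∀ u ∈ p, ∀ v ∈ p, u ≠ v → colorSet F ψ u ≠ colorSet F ψ v) ∧
      (∀ v : V, ∀ u ∈ Bφ v, colorSet F ψ u ≠ colorSet F ψ v) := by
  classical
  obtain ⟨hφ1, hφ2⟩ := hφ
  -- membership in colorSet
  have memCS : ∀ (χ : Sym2 V → ℕ) (v : V) (c : ℕ),
      c ∈ colorSet F χ v ↔ ∃ e ∈ F.edgeSet, v ∈ e ∧ χ e = c := fun _ _ _ => Iff.rfl
  -- a vertex has at most one edge of each color
  have uniqE : ∀ (v : V) (e f : Sym2 V), e ∈ F.edgeSet → f ∈ F.edgeSet →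
      v ∈ e → v ∈ f → φ e = φ f → e = f := by
    intro v e f he hf hve hvf hc
    by_contra hne
    exact hφ2 e he f hf hne ⟨v, hve, hvf⟩ hc
  -- closure under adjacency implies containing the whole walk
  have walkcl : ∀ (s : Set V), (∀ x ∈ s, ∀ y, F.Adj x y → y ∈ s) →
      ∀ {u w : V}, F.Walk u w → u ∈ s → w ∈ s := by
    intro s hs u w p
    induction p with
    | nil => exact id
    | cons h q ih => exact fun hu => ih (hs _ hu _ h)
  -- every component has at least 3 vertices
  have suppcard : ∀ c : F.ConnectedComponent, 3 ≤ c.supp.ncard := by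
    intro c
    have key : ∀ n : ℕ, IsPathOn (F.induce c.supp) n → c.supp.ncard = n := by
      intro n ⟨iso⟩
      have h2 : Nat.card c.supp = n := by
        rw [Nat.card_congr iso.toEquiv]
        simp
      rw [← Nat.card_coe_set_eq, h2]
    rcases hF c with h | h | h
    · rw [key 3 h]
    · rw [key 4 h]; omega
    · rw [key 5 h]; omega
  -- small closed sets are impossible
  have small : ∀ (v : V) (s : Set V), (∀ x ∈ s, ∀ y, F.Adj x y → y ∈ s) →
      v ∈ s → s.ncard ≤ 2 → False := by
    intro v s hs hv hcard
    have hsub : (F.connectedComponentMk v).supp ⊆ s := by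
      intro w hw
      rw [SimpleGraph.ConnectedComponent.mem_supp_iff] at hw
      have hr : F.Reachable v w := (SimpleGraph.ConnectedComponent.eq.1 hw).symm
      obtain ⟨p⟩ := hr
      exact walkcl s hs p hv
    have := Set.ncard_le_ncard hsub (Set.toFinite s)
    have := suppcard (F.connectedComponentMk v)
    omega
  -- no isolated vertices
  have noiso : ∀ v : V, ∃ e ∈ F.edgeSet, v ∈ e := by
    intro v
    by_contra h
    push_neg at h
    refine small v {v} ?_ rfl (by simp)
    intro x hx y hxy
    rw [Set.mem_singleton_iff] at hx
    subst hx
    exact absurd (F.mem_edgeSet.mpr hxy) (by simpa using h s(x, y) · (Sym2.mem_mk_left x y))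
  have csne : ∀ v : V, (colorSet F φ v).Nonempty := by
    intro v
    obtain ⟨e, he, hv⟩ := noiso v
    exact ⟨φ e, e, he, hv, rfl⟩
  -- two distinct members determine the edge
  have eqEdge : ∀ (u v : V) (e : Sym2 V), u ≠ v → u ∈ e → v ∈ e → e = s(u, v) := by
    intro u v e hne hu hv
    exact (Sym2.mem_and_mem_iff hne).1 ⟨hu, hv⟩
  -- existence of two distinct equally-colored edges at a conflicting pair
  have pairE : ∀ u v : V, u ≠ v → colorSet F φ u = colorSet F φ v →
      ∃ e f : Sym2 V, e ∈ F.edgeSet ∧ f ∈ F.edgeSet ∧ u ∈ e ∧ v ∈ f ∧ φ e = φ f ∧ e ≠ f := by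
    intro u v hne hcs
    by_cases hadj : F.Adj u v
    · by_cases hall : ∀ a ∈ colorSet F φ u, a = φ s(u, v)
      · exfalso
        refine small u {u, v} ?_ (by simp) ?_
        · intro x hx y hxy
          have hedge : s(x, y) ∈ F.edgeSet := F.mem_edgeSet.mpr hxy
          rcases hx with hx | hx
          · subst hx
            have hmem : φ s(x, y) ∈ colorSet F φ x := ⟨s(x, y), hedge, Sym2.mem_mk_left _ _, rfl⟩
            have := hall _ hmem
            have heq : s(x, y) = s(x, v) :=
              uniqE x _ _ hedge (F.mem_edgeSet.mpr hadj) (Sym2.mem_mk_left _ _)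
                (Sym2.mem_mk_left _ _) this
            have : y = v := Sym2.congr_right.1 heq
            simp [this]
          · rw [Set.mem_singleton_iff] at hx
            subst hx
            have hmem : φ s(x, y) ∈ colorSet F φ x := ⟨s(x, y), hedge, Sym2.mem_mk_left _ _, rfl⟩
            rw [← hcs] at hmem
            have h2 := hall _ hmem
            have heq : s(x, y) = s(u, x) :=
              uniqE x _ _ hedge (F.mem_edgeSet.mpr hadj) (Sym2.mem_mk_left _ _)
                (Sym2.mem_mk_right _ _) (by rw [h2])
            have heq2 : s(x, y) = s(x, u) := heq.trans Sym2.eq_swap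
            have : y = u := Sym2.congr_right.1 heq2
            simp [this]
        · have : ({u, v} : Set V).ncard ≤ 2 := by
            refine le_trans (Set.ncard_insert_le _ _) ?_
            simp
          exact this
      · push_neg at hall
        obtain ⟨a, ha, hane⟩ := hall
        obtain ⟨e, he, hue, hea⟩ := ha
        have ha' : a ∈ colorSet F φ v := hcs ▸ ⟨e, he, hue, hea⟩
        obtain ⟨f, hf, hvf, hfa⟩ := ha'
        refine ⟨e, f, he, hf, hue, hvf, by rw [hea, hfa], ?_⟩
        intro hef
        subst hef
        have : e = s(u, v) := eqEdge u v e hne hue hvf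
        exact hane (by rw [← hea, this])
    · obtain ⟨a, ha⟩ := csne u
      obtain ⟨e, he, hue, hea⟩ := ha
      have ha' : a ∈ colorSet F φ v := hcs ▸ ⟨e, he, hue, hea⟩
      obtain ⟨f, hf, hvf, hfa⟩ := ha'
      refine ⟨e, f, he, hf, hue, hvf, by rw [hea, hfa], ?_⟩
      intro hef
      subst hef
      have : e = s(u, v) := eqEdge u v e hne hue hvf
      exact hadj (F.mem_edgeSet.mp (this ▸ he))
  -- conflict condition
  set Cond : Finset V → Prop := fun p => p ∈ B ∧ ∃ u v : V, u ∈ p ∧ v ∈ p ∧ u ≠ v ∧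
      colorSet F φ u = colorSet F φ v with hCond
  have exData : ∀ p : Finset V, Cond p → ∃ u v : V, ∃ e f : Sym2 V,
      u ∈ p ∧ v ∈ p ∧ u ≠ v ∧ e ∈ F.edgeSet ∧ f ∈ F.edgeSet ∧ u ∈ e ∧ v ∈ f ∧
      φ e = φ f ∧ e ≠ f := by
    rintro p ⟨hpB, u, v, hu, hv, hne, hcs⟩
    obtain ⟨e, f, he, hf, hue, hvf, hphi, hef⟩ := pairE u v hne hcs
    exact ⟨u, v, e, f, hu, hv, hne, he, hf, hue, hvf, hphi, hef⟩
  choose up vp ep fp hup hvp hnep heS hfS hue hvf hpc hef using exData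
  -- constraint relation on edges
  set R : Sym2 V → Sym2 V → Prop := fun e f => ∃ p : Finset V, ∃ h : Cond p,
      (e = ep p h ∧ f = fp p h) ∨ (e = fp p h ∧ f = ep p h) with hR
  have hsym : ∀ a b, R a b → R b a := by
    rintro a b ⟨p, h, ⟨h1, h2⟩ | ⟨h1, h2⟩⟩
    · exact ⟨p, h, Or.inr ⟨h2, h1⟩⟩
    · exact ⟨p, h, Or.inl ⟨h2, h1⟩⟩
  have hirr : ∀ a, ¬ R a a := by
    rintro a ⟨p, h, ⟨h1, h2⟩ | ⟨h1, h2⟩⟩ <;> exact hef p h (by rw [← h1, ← h2])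
  -- the "side vertex": for e ∈ {ep, fp}, a vertex of p lying on e
  have sideV : ∀ (a : Sym2 V) (p : Finset V) (h : Cond p), (a = ep p h ∨ a = fp p h) →
      ∃ w, w ∈ p ∧ w ∈ a := by
    rintro a p h (rfl | rfl)
    · exact ⟨up p h, hup p h, hue p h⟩
    · exact ⟨vp p h, hvp p h, hvf p h⟩
  -- same pair determines the constraint partner
  have samep : ∀ (a b₁ b₂ : Sym2 V) (p : Finset V) (h h' : Cond p),
      ((a = ep p h ∧ b₁ = fp p h) ∨ (a = fp p h ∧ b₁ = ep p h)) →
      ((a = ep p h' ∧ b₂ = fp p h') ∨ (a = fp p h' ∧ b₂ = ep p h')) → b₁ = b₂ := by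
    intro a b₁ b₂ p h h' h1 h2
    have : h = h' := rfl
    subst this
    rcases h1 with ⟨ha, hb⟩ | ⟨ha, hb⟩ <;> rcases h2 with ⟨ha', hb'⟩ | ⟨ha', hb'⟩
    · rw [hb, hb']
    · exact absurd (by rw [← ha, ha']) (hef p h)
    · exact absurd (by rw [← ha', ha]) (hef p h)
    · rw [hb, hb']
  have hdeg : ∀ a b₁ b₂ b₃ : Sym2 V, R a b₁ → R a b₂ → R a b₃ →
      b₁ = b₂ ∨ b₁ = b₃ ∨ b₂ = b₃ := by
    rintro a b₁ b₂ b₃ ⟨p₁, h₁, hd₁⟩ ⟨p₂, h₂, hd₂⟩ ⟨p₃, h₃, hd₃⟩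
    by_cases e12 : p₁ = p₂
    · subst e12; exact Or.inl (samep a b₁ b₂ p₁ h₁ h₂ hd₁ hd₂)
    by_cases e13 : p₁ = p₃
    · subst e13; exact Or.inr (Or.inl (samep a b₁ b₃ p₁ h₁ h₃ hd₁ hd₃))
    by_cases e23 : p₂ = p₃
    · subst e23; exact Or.inr (Or.inr (samep a b₂ b₃ p₂ h₂ h₃ hd₂ hd₃))
    exfalso
    obtain ⟨w₁, hw₁p, hw₁a⟩ := sideV a p₁ h₁ (by rcases hd₁ with ⟨h', _⟩ | ⟨h', _⟩ <;> [exact Or.inl h'; exact Or.inr h'])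
    obtain ⟨w₂, hw₂p, hw₂a⟩ := sideV a p₂ h₂ (by rcases hd₂ with ⟨h', _⟩ | ⟨h', _⟩ <;> [exact Or.inl h'; exact Or.inr h'])
    obtain ⟨w₃, hw₃p, hw₃a⟩ := sideV a p₃ h₃ (by rcases hd₃ with ⟨h', _⟩ | ⟨h', _⟩ <;> [exact Or.inl h'; exact Or.inr h'])
    have d12 : w₁ ≠ w₂ := by
      intro hw; exact (Finset.disjoint_left.1 (hBdisj p₁ h₁.1 p₂ h₂.1 e12)) hw₁p (hw ▸ hw₂p)
    have d13 : w₁ ≠ w₃ := by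
      intro hw; exact (Finset.disjoint_left.1 (hBdisj p₁ h₁.1 p₃ h₃.1 e13)) hw₁p (hw ▸ hw₃p)
    have d23 : w₂ ≠ w₃ := by
      intro hw; exact (Finset.disjoint_left.1 (hBdisj p₂ h₂.1 p₃ h₃.1 e23)) hw₂p (hw ▸ hw₃p)
    obtain ⟨⟨x, y⟩, rfl⟩ := Quot.exists_rep a
    rw [Sym2.mem_iff] at hw₁a hw₂a hw₃a
    rcases hw₁a with rfl | rfl <;> rcases hw₂a with h | h <;> rcases hw₃a with h' | h' <;>
      first | exact d12 h.symm | exact d13 h'.symm | exact d23 (h ▸ h'.symm)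
  obtain ⟨ℓ, hℓ⟩ := greedy_three R hsym hirr hdeg
  -- the new coloring
  set ψ : Sym2 V → ℕ := fun e => φ e + k * (ℓ e).val with hψ
  have hbounds : ∀ e ∈ F.edgeSet, 1 ≤ φ e ∧ φ e ≤ k := by
    intro e he
    exact Finset.mem_Icc.1 (hφ1 e he)
  have injψ : ∀ e f : Sym2 V, e ∈ F.edgeSet → f ∈ F.edgeSet → ψ e = ψ f →
      φ e = φ f ∧ ℓ e = ℓ f := by
    intro e f he hf h
    obtain ⟨h1, h2⟩ := hbounds e he
    obtain ⟨h3, h4⟩ := hbounds f hf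
    obtain ⟨hc, hl⟩ := shift_inj k (φ e) (φ f) (ℓ e).val (ℓ f).val h1 h2 h3 h4
      (ℓ e).isLt (ℓ f).isLt h
    exact ⟨hc, Fin.ext hl⟩
  -- decoding: ψ color-sets determine φ color-sets
  have decode_sub : ∀ u v : V, colorSet F ψ u ⊆ colorSet F ψ v →
      colorSet F φ u ⊆ colorSet F φ v := by
    intro u v h a ha
    obtain ⟨e, he, hue, hea⟩ := ha
    have : ψ e ∈ colorSet F ψ v := h ⟨e, he, hue, rfl⟩
    obtain ⟨f, hf, hvf, hfe⟩ := this
    exact ⟨f, hf, hvf, by rw [(injψ f e hf he hfe).1, hea]⟩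
  have decode : ∀ u v : V, colorSet F ψ u = colorSet F ψ v →
      colorSet F φ u = colorSet F φ v := by
    intro u v h
    exact Set.Subset.antisymm (decode_sub u v h.le) (decode_sub v u h.ge)
  -- key separation for conflict pairs
  have sep : ∀ (p : Finset V) (h : Cond p), colorSet F ψ (up p h) ≠ colorSet F ψ (vp p h) := by
    intro p h heq
    have h1 : ψ (ep p h) ∈ colorSet F ψ (up p h) := ⟨ep p h, heS p h, hue p h, rfl⟩
    rw [heq] at h1
    obtain ⟨g, hg, hvg, hge⟩ := h1
    obtain ⟨hc, hl⟩ := injψ g (ep p h) hg (heS p h) hge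
    have hgf : g = fp p h := uniqE (vp p h) g (fp p h) hg (hfS p h) hvg (hvf p h)
      (by rw [hc, hpc p h])
    have : ℓ (ep p h) ≠ ℓ (fp p h) := hℓ _ _ ⟨p, h, Or.inl ⟨rfl, rfl⟩⟩
    exact this (by rw [← hl, hgf])
  -- 3k ≤ (7k+2)/2
  have hK : 3 * k ≤ (7 * k + 2) / 2 := by
    rw [Nat.le_div_iff_mul_le (by norm_num)]
    omega
  refine ⟨ψ, ⟨?_, ?_⟩, ?_, ?_⟩
  · intro e he
    obtain ⟨h1, h2⟩ := hbounds e he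
    have h3 : (ℓ e).val ≤ 2 := Nat.lt_succ_iff.1 (ℓ e).isLt
    rw [Finset.mem_Icc]
    constructor
    · simp only [hψ]; omega
    · have : ψ e ≤ k + k * 2 := by
        simp only [hψ]
        have := Nat.mul_le_mul_left k h3
        omega
      omega
  · intro e₁ h1 e₂ h2 hne hshare heq
    exact hφ2 e₁ h1 e₂ h2 hne hshare (injψ e₁ e₂ h1 h2 heq).1
  · -- pairs in B
    intro p hp u hu v hv huv heq
    have hcs : colorSet F φ u = colorSet F φ v := decode u v heq
    have hcond : Cond p := ⟨hp, u, v, hu, hv, huv, hcs⟩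
    -- identify {up, vp} with {u, v}
    have hcard := hB2 p hp
    have hmem : ∀ w ∈ p, w = u ∨ w = v := by
      intro w hw
      by_contra hcon
      push_neg at hcon
      have : ({u, v, w} : Finset V) ⊆ p := by
        intro x hx
        simp only [Finset.mem_insert, Finset.mem_singleton] at hx
        rcases hx with rfl | rfl | rfl <;> assumption
      have h3 : ({u, v, w} : Finset V).card = 3 := by
        rw [Finset.card_insert_of_notMem (by simp [huv, hcon.1.symm]),
          Finset.card_insert_of_notMem (by simp [hcon.2.symm]), Finset.card_singleton]
      have := Finset.card_le_card this
      omega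
    rcases hmem _ (hup p hcond) with h1 | h1 <;> rcases hmem _ (hvp p hcond) with h2 | h2
    · exact hnep p hcond (by rw [h1, h2])
    · exact sep p hcond (by rw [h1, h2]; exact heq)
    · exact sep p hcond (by rw [h1, h2]; exact heq.symm)
    · exact hnep p hcond (by rw [h1, h2])
  · intro v u hu heq
    exact hBφdist v u hu (decode u v heq)
end

section
/- Let G be a finite simple graph, k an integer with k ≥ χ'(G), and let φ be an optimal edge-k-coloring of G, that is, an edge-k-coloring minimizing the sum over all subsets S ⊆ {1,…,k} of (n_φ^S)², where n_φ^S is the number of vertices of G whose color-set under φ equals S. Then |n_φ^S − n_φ^{S'}| ≤ 2 for all subsets S, S' ⊆ {1,…,k} with |S| = |S'|. -/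
/-- The chromatic index: the least `k` for which `G` has a proper edge-`k`-coloring. -/
noncomputable def edgeChromaticIndex {V : Type*} (G : SimpleGraph V) : ℕ :=
  sInf {k | ∃ φ : Sym2 V → ℕ, IsEdgeKColoring G k φ}

/-- `n_φ^S`: the number of vertices whose color-set under `φ` is `S`. -/
noncomputable def nColorSet {V : Type*} (G : SimpleGraph V) (φ : Sym2 V → ℕ) (S : Set ℕ) : ℕ :=
  {v : V | colorSet G φ v = S}.ncard

/-- `∑_{S ⊆ {1,…,k}} (n_φ^S)²`, the quantity minimized by an optimal edge-`k`-coloring. -/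
noncomputable def colSum {V : Type*} (G : SimpleGraph V) (k : ℕ) (φ : Sym2 V → ℕ) : ℕ :=
  ∑ S ∈ (Finset.Icc 1 k).powerset, (nColorSet G φ (↑S : Set ℕ)) ^ 2

open Finset

namespace SimpleGraph

variable {V : Type*} [Fintype V] {H : SimpleGraph V} [DecidableRel H.Adj]

theorem Reachable.one_le_degree {u v : V} (h : H.Reachable u v) (hne : u ≠ v) :
    1 ≤ H.degree v := by
  obtain ⟨p⟩ := h.symm
  cases p with
  | nil => exact absurd rfl hne
  | cons hadj _ => exact H.degree_pos_iff_exists_adj v |>.mpr ⟨_, hadj⟩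

/-- In the component `C` of `u`, `2 |C| - #leaves = ∑ degrees = 2 |E(C)| ≥ 2 |C| - 2`. -/
theorem ncard_reachable_degree_eq_one (hdeg : ∀ v, H.degree v ≤ 2) {u : V}
    (hu : H.degree u = 1) : {v | H.Reachable u v ∧ H.degree v = 1}.ncard = 2 := by
  classical
  set C := H.connectedComponentMk u
  set s : Finset V := {v | H.Reachable u v}
  have hs : ∀ v, v ∈ s ↔ v ∈ C.supp := fun v => by
    simp [s, C, ConnectedComponent.mem_supp_iff, ConnectedComponent.eq, reachable_comm]
  have hdeg_pos : ∀ v ∈ s, 1 ≤ H.degree v := fun v hv => by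
    rcases eq_or_ne u v with rfl | hne
    · exact hu.ge
    · exact (mem_filter.mp hv).2.one_le_degree hne
  have hsum : ∑ v ∈ s, H.degree v + #{v ∈ s | H.degree v = 1} = 2 * #s := by
    rw [card_filter, ← sum_add_distrib, mul_comm, ← smul_eq_mul, ← sum_const]
    refine sum_congr rfl fun v hv => ?_
    have := hdeg v; have := hdeg_pos v hv
    split_ifs <;> omega
  have hdegsum : ∑ v ∈ s, H.degree v = 2 * #(H.induce C.supp).edgeFinset := by
    rw [sum_subtype s hs, ← sum_degrees_eq_twice_card_edges]
    refine Fintype.sum_congr _ _ fun v => (degree_induce_of_neighborSet_subset fun w hw => ?_).symm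
    rw [ConnectedComponent.mem_supp_iff] at *
    rw [← v.2]
    exact (ConnectedComponent.eq.mpr (Adj.reachable hw)).symm
  have hconn : (H.induce C.supp).Connected := C.connected_toSimpleGraph
  replace hconn := hconn.card_vert_le_card_edgeSet_add_one
  rw [Nat.card_eq_fintype_card, Nat.card_eq_fintype_card, ← edgeFinset_card,
    Fintype.card_of_subtype s hs] at hconn
  have hleaf : {v | H.Reachable u v ∧ H.degree v = 1}.ncard = #{v ∈ s | H.degree v = 1} := by
    rw [← Set.ncard_coe_finset]; congr 1; ext v; simp [s]
  have hu_mem : u ∈ ({v ∈ s | H.degree v = 1} : Finset V) := by simp [s, hu]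
  have := card_pos.mpr ⟨u, hu_mem⟩
  rw [hleaf]
  omega

end SimpleGraph

section Swap

variable {α : Type*} [DecidableEq α] {a b c : α} {s t : Set α}

theorem Equiv.swap_apply_mem (ha : a ∈ s) (hb : b ∈ s) (hc : c ∈ s) :
    Equiv.swap a b c ∈ s := by
  rw [Equiv.swap_apply_def]
  split_ifs <;> assumption

theorem Set.image_swap_eq_self_iff : Equiv.swap a b '' s = s ↔ (a ∈ s ↔ b ∈ s) := by
  simp only [Set.ext_iff, Set.mem_image_equiv, Equiv.symm_swap]
  refine ⟨fun h => ?_, fun h c => ?_⟩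
  · simpa using (h a).symm
  rcases eq_or_ne c a with rfl | hca
  · simpa using h.symm
  rcases eq_or_ne c b with rfl | hcb
  · simpa using h
  rw [Equiv.swap_apply_of_ne_of_ne hca hcb]

theorem Set.eq_image_swap_iff : s = Equiv.swap a b '' t ↔ Equiv.swap a b '' s = t := by
  rw [Equiv.eq_image_iff_symm_image_eq, Equiv.symm_swap]

end Swap

section SwapColors

variable {a b x y : ℕ} {S T U : Finset ℕ}

def swapColors (a b : ℕ) (S : Finset ℕ) : Finset ℕ := S.image (Equiv.swap a b)

theorem mem_swapColors {c : ℕ} : c ∈ swapColors a b S ↔ Equiv.swap a b c ∈ S := by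
  simp only [swapColors, mem_image]
  exact ⟨fun ⟨d, hd, h⟩ => h ▸ (Equiv.swap_apply_self a b d).symm ▸ hd,
    fun h => ⟨_, h, Equiv.swap_apply_self a b c⟩⟩

theorem mem_swapColors_left : a ∈ swapColors a b S ↔ b ∈ S := by
  rw [mem_swapColors, Equiv.swap_apply_left]

theorem mem_swapColors_right : b ∈ swapColors a b S ↔ a ∈ S := by
  rw [mem_swapColors, Equiv.swap_apply_right]

theorem coe_swapColors : (swapColors a b S : Set ℕ) = Equiv.swap a b '' S := coe_image

@[simp]
theorem swapColors_swapColors : swapColors a b (swapColors a b S) = S := by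
  ext c; simp only [mem_swapColors, Equiv.swap_apply_self]

theorem swapColors_eq_iff : swapColors a b S = T ↔ S = swapColors a b T :=
  ⟨fun h => by rw [← h, swapColors_swapColors], fun h => by rw [h, swapColors_swapColors]⟩

theorem swapColors_injective : Function.Injective (swapColors a b) :=
  Function.LeftInverse.injective fun _ => swapColors_swapColors

theorem card_swapColors : #(swapColors a b S) = #S :=
  card_image_of_injective _ (Equiv.swap a b).injective

theorem swapColors_sdiff : swapColors a b (S \ T) = swapColors a b S \ swapColors a b T :=
  image_sdiff _ _ (Equiv.swap a b).injective

theorem swapColors_inter : swapColors a b (S ∩ T) = swapColors a b S ∩ swapColors a b T :=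
  image_inter _ _ (Equiv.swap a b).injective

theorem swapColors_union : swapColors a b (S ∪ T) = swapColors a b S ∪ swapColors a b T :=
  image_union _ _

theorem swapColors_subset_Icc {k : ℕ} (hS : S ⊆ Icc 1 k) (ha : a ∈ Icc 1 k)
    (hb : b ∈ Icc 1 k) : swapColors a b S ⊆ Icc 1 k := fun c hc => by
  simpa using Equiv.swap_apply_mem (s := (Icc 1 k : Set ℕ)) ha hb (hS (mem_swapColors.mp hc))

theorem swapColors_eq_self_iff : swapColors a b S = S ↔ (a ∈ S ↔ b ∈ S) := by
  rw [← coe_inj, coe_swapColors, Set.image_swap_eq_self_iff, mem_coe, mem_coe]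

theorem swapColors_of_mem_of_notMem (hx : x ∈ S) (hy : y ∉ S) :
    swapColors x y S = insert y (S.erase x) := by
  have hxy : x ≠ y := ne_of_mem_of_not_mem hx hy
  ext c
  rw [mem_swapColors, mem_insert, mem_erase]
  rcases eq_or_ne c x with rfl | hcx
  · simp [hy, hxy]
  rcases eq_or_ne c y with rfl | hcy
  · simp [hx]
  simp [Equiv.swap_apply_of_ne_of_ne hcx hcy, hcx, hcy]

theorem card_swapColors_sdiff (hx : x ∈ S) (hxU : x ∉ U) (hy : y ∈ U) (hyS : y ∉ S) :
    #(swapColors x y S \ U) + 1 = #(S \ U) := by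
  rw [swapColors_of_mem_of_notMem hx hyS, insert_sdiff_of_mem _ hy, erase_sdiff_comm,
    card_erase_add_one (mem_sdiff.mpr ⟨hx, hxU⟩)]

theorem swapColors_eq_of_card_sdiff_eq_one (hcard : #S = #T) (h1 : #(S \ T) = 1)
    (hx : x ∈ S) (hxT : x ∉ T) (hy : y ∈ T) (hyS : y ∉ S) : swapColors x y S = T := by
  have h0 := card_swapColors_sdiff hx hxT hy hyS
  rw [h1, add_eq_right, card_eq_zero, sdiff_eq_empty_iff_subset] at h0
  exact eq_of_subset_of_card_le h0 (by rw [card_swapColors, hcard])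

end SwapColors

section Kempe

variable {V : Type*} {G : SimpleGraph V} {k : ℕ} {ψ : Sym2 V → ℕ} {a b : ℕ} {C : Finset V}

/-- Its components are the Kempe chains of `ψ` for the colours `a` and `b`. -/
def kempeGraph (G : SimpleGraph V) (ψ : Sym2 V → ℕ) (a b : ℕ) : SimpleGraph V where
  Adj u v := G.Adj u v ∧ (ψ s(u, v) = a ∨ ψ s(u, v) = b)
  symm := ⟨fun u v h => by rw [Sym2.eq_swap]; exact ⟨h.1.symm, h.2⟩⟩
  loopless := ⟨fun v h => G.irrefl h.1⟩

def IsKempeClosed (G : SimpleGraph V) (ψ : Sym2 V → ℕ) (a b : ℕ) (C : Finset V) : Prop :=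
  ∀ ⦃u v⦄, (kempeGraph G ψ a b).Adj u v → u ∈ C → v ∈ C

theorem IsKempeClosed.mem_of_reachable (hC : IsKempeClosed G ψ a b C) {u v : V}
    (h : (kempeGraph G ψ a b).Reachable u v) (hu : u ∈ C) : v ∈ C := by
  obtain ⟨p⟩ := h
  induction p with
  | nil => exact hu
  | cons hadj _ ih => exact ih (hC hadj hu)

theorem IsKempeClosed.union [DecidableEq V] {D : Finset V} (hC : IsKempeClosed G ψ a b C)
    (hD : IsKempeClosed G ψ a b D) : IsKempeClosed G ψ a b (C ∪ D) := fun _ _ h hu =>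
  (mem_union.mp hu).elim (fun hu => mem_union_left _ (hC h hu))
    (fun hu => mem_union_right _ (hD h hu))

open Classical in
/-- For Kempe-closed `C`, this swaps `a` and `b` on the Kempe chains through `C`: the other
edges meeting `C` have colours fixed by the swap. -/
noncomputable def kempeSwap (ψ : Sym2 V → ℕ) (a b : ℕ) (C : Finset V) (e : Sym2 V) : ℕ :=
  if ∃ v ∈ e, v ∈ C then Equiv.swap a b (ψ e) else ψ e

theorem kempeSwap_of_mem {e : Sym2 V} {v : V} (hv : v ∈ e) (hvC : v ∈ C) :
    kempeSwap ψ a b C e = Equiv.swap a b (ψ e) := by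
  simp only [kempeSwap, if_pos (⟨v, hv, hvC⟩ : ∃ v ∈ e, v ∈ C)]

theorem kempeSwap_of_notMem (hC : IsKempeClosed G ψ a b C) {e : Sym2 V} (he : e ∈ G.edgeSet)
    {v : V} (hv : v ∈ e) (hvC : v ∉ C) : kempeSwap ψ a b C e = ψ e := by
  obtain ⟨w, rfl⟩ := Sym2.mem_iff_exists.mp hv
  by_cases hwC : w ∈ C
  · have hc : ψ s(v, w) ≠ a ∧ ψ s(v, w) ≠ b := by
      by_contra h
      refine hvC (hC (u := w) ⟨G.adj_symm he, ?_⟩ hwC)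
      rw [Sym2.eq_swap]
      tauto
    rw [kempeSwap_of_mem (Sym2.mem_mk_right v w) hwC, Equiv.swap_apply_of_ne_of_ne hc.1 hc.2]
  · simp only [kempeSwap, Sym2.mem_iff, exists_eq_or_imp, exists_eq_left, hvC, hwC, or_self,
      if_false]

theorem isEdgeKColoring_kempeSwap (hψ : IsEdgeKColoring G k ψ) (ha : a ∈ Icc 1 k)
    (hb : b ∈ Icc 1 k) (hC : IsKempeClosed G ψ a b C) :
    IsEdgeKColoring G k (kempeSwap ψ a b C) := by
  refine ⟨fun e he => ?_, fun e₁ he₁ e₂ he₂ hne ⟨v, hv₁, hv₂⟩ => ?_⟩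
  · induction e using Sym2.ind with | _ v w => ?_
    by_cases hvC : v ∈ C
    · rw [kempeSwap_of_mem (Sym2.mem_mk_left v w) hvC]
      exact Equiv.swap_apply_mem (s := (Icc 1 k : Set ℕ)) ha hb (hψ.1 _ he)
    · rw [kempeSwap_of_notMem hC he (Sym2.mem_mk_left v w) hvC]
      exact hψ.1 _ he
  · have hne' := hψ.2 e₁ he₁ e₂ he₂ hne ⟨v, hv₁, hv₂⟩
    by_cases hvC : v ∈ C
    · rw [kempeSwap_of_mem hv₁ hvC, kempeSwap_of_mem hv₂ hvC]
      exact (Equiv.swap a b).injective.ne hne'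
    · rwa [kempeSwap_of_notMem hC he₁ hv₁ hvC, kempeSwap_of_notMem hC he₂ hv₂ hvC]

theorem colorSet_eq_image {ψ' : Sym2 V → ℕ} {v : V} {f : ℕ → ℕ}
    (h : ∀ e ∈ G.edgeSet, v ∈ e → ψ' e = f (ψ e)) :
    colorSet G ψ' v = f '' colorSet G ψ v := by
  ext c
  constructor
  · rintro ⟨e, he, hv, rfl⟩
    exact ⟨ψ e, ⟨e, he, hv, rfl⟩, (h e he hv).symm⟩
  · rintro ⟨_, ⟨e, he, hv, rfl⟩, rfl⟩
    exact ⟨e, he, hv, h e he hv⟩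

theorem colorSet_kempeSwap_of_mem {v : V} (hv : v ∈ C) :
    colorSet G (kempeSwap ψ a b C) v = Equiv.swap a b '' colorSet G ψ v :=
  colorSet_eq_image fun _ _ hve => kempeSwap_of_mem hve hv

theorem colorSet_kempeSwap_of_notMem (hC : IsKempeClosed G ψ a b C) {v : V} (hv : v ∉ C) :
    colorSet G (kempeSwap ψ a b C) v = colorSet G ψ v := by
  rw [← Set.image_id (colorSet G ψ v)]
  exact colorSet_eq_image fun _ he hve => kempeSwap_of_notMem hC he hve hv

theorem exists_finset_coe_eq_colorSet (hψ : IsEdgeKColoring G k ψ) (v : V) :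
    ∃ X ⊆ Icc 1 k, (X : Set ℕ) = colorSet G ψ v := by
  classical
  refine ⟨{c ∈ Icc 1 k | c ∈ colorSet G ψ v}, filter_subset _ _, ?_⟩
  ext c
  simp only [coe_filter, Set.mem_ofPred_eq, and_iff_right_iff_imp]
  rintro ⟨e, he, -, rfl⟩
  exact hψ.1 e he

end Kempe

section Counting

variable {V : Type*} {G : SimpleGraph V} {k : ℕ} {ψ ψ' : Sym2 V → ℕ} {a b : ℕ}
  {C : Finset V}

open Classical in
theorem nColorSet_eq_sum [Fintype V] (G : SimpleGraph V) (ψ : Sym2 V → ℕ) (X : Set ℕ) :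
    (nColorSet G ψ X : ℤ) = ∑ v, if colorSet G ψ v = X then 1 else 0 := by
  rw [sum_boole, nColorSet, ← Set.ncard_coe_finset]
  congr 3
  ext v
  simp

theorem colSum_sub_colSum {f : Finset ℕ → ℤ}
    (h : ∀ S : Finset ℕ, (nColorSet G ψ' S : ℤ) = nColorSet G ψ S - f S) :
    (colSum G k ψ' : ℤ) - colSum G k ψ =
      ∑ S ∈ (Icc 1 k).powerset, (f S - 2 * nColorSet G ψ S) * f S := by
  simp only [colSum, Nat.cast_sum, Nat.cast_pow, ← sum_sub_distrib, h]
  exact sum_congr rfl fun S _ => by ring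

/-- The decrease of the class counts when one vertex moves from class `S` to `swapColors a b S`. -/
def transfer (a b : ℕ) (S W : Finset ℕ) : ℤ :=
  (if W = S then 1 else 0) - (if W = swapColors a b S then 1 else 0)

theorem transfer_swapColors (S : Finset ℕ) :
    transfer a b (swapColors a b S) = -transfer a b S := by
  ext W
  simp only [transfer, swapColors_swapColors, Pi.neg_apply]
  ring

theorem sum_mul_transfer {X : Finset ℕ} (hX : X ⊆ Icc 1 k) (ha : a ∈ Icc 1 k)
    (hb : b ∈ Icc 1 k) (h : Finset ℕ → ℤ) :
    ∑ S ∈ (Icc 1 k).powerset, h S * transfer a b X S = h X - h (swapColors a b X) := by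
  simp only [transfer, mul_sub, mul_ite, mul_one, mul_zero, sum_sub_distrib, sum_ite_eq',
    mem_powerset, hX, swapColors_subset_Icc hX ha hb, if_true]

open Classical in
/-- The decrease of the class counts when the colours `a` and `b` are exchanged at `v`. -/
noncomputable def vertexFlow (G : SimpleGraph V) (ψ : Sym2 V → ℕ) (a b : ℕ) (v : V)
    (W : Finset ℕ) : ℤ :=
  (if colorSet G ψ v = W then 1 else 0) - (if colorSet G ψ v = swapColors a b W then 1 else 0)

noncomputable def kempeFlow (G : SimpleGraph V) (ψ : Sym2 V → ℕ) (a b : ℕ) (C : Finset V)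
    (W : Finset ℕ) : ℤ :=
  ∑ v ∈ C, vertexFlow G ψ a b v W

theorem vertexFlow_of_colorSet_eq {v : V} {X : Finset ℕ} (h : colorSet G ψ v = X) :
    vertexFlow G ψ a b v = transfer a b X := by
  ext W
  simp only [vertexFlow, transfer, h, coe_inj, eq_comm (a := X), swapColors_eq_iff]

theorem vertexFlow_eq_zero {v : V} (h : a ∈ colorSet G ψ v ↔ b ∈ colorSet G ψ v) :
    vertexFlow G ψ a b v = 0 := by
  ext W
  rw [← Set.image_swap_eq_self_iff] at h
  simp only [vertexFlow, Pi.zero_apply, coe_swapColors, Set.eq_image_swap_iff, h, sub_self]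

theorem nColorSet_kempeSwap [Fintype V] (hC : IsKempeClosed G ψ a b C) (W : Finset ℕ) :
    (nColorSet G (kempeSwap ψ a b C) W : ℤ) = nColorSet G ψ W - kempeFlow G ψ a b C W := by
  classical
  have key : ∀ v, (if colorSet G (kempeSwap ψ a b C) v = W then (1 : ℤ) else 0) =
      (if colorSet G ψ v = W then 1 else 0) - if v ∈ C then vertexFlow G ψ a b v W else 0 := by
    intro v
    by_cases hv : v ∈ C
    · simp only [colorSet_kempeSwap_of_mem hv, vertexFlow, if_pos hv, coe_swapColors,
        ← Set.eq_image_swap_iff]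
      ring
    · rw [colorSet_kempeSwap_of_notMem hC hv, if_neg hv, sub_zero]
  rw [nColorSet_eq_sum, nColorSet_eq_sum, kempeFlow, sum_congr rfl fun v _ => key v,
    sum_sub_distrib, sum_ite_mem, univ_inter]

/-- The count changes of moving one vertex from `S` to `σ S` and one from `σ T` to `T`. -/
theorem nColorSet_of_transfer_add_transfer {S T : Finset ℕ} (hN : ∀ W : Finset ℕ,
      (nColorSet G ψ' W : ℤ) =
        nColorSet G ψ W - transfer a b S W - transfer a b (swapColors a b T) W)
    (haS : a ∈ S) (haT : a ∉ T) (hbT : b ∈ T) (hbS : b ∉ S)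
    (hσS_T : swapColors a b S ≠ T) :
    (nColorSet G ψ' (swapColors a b S) : ℤ) = nColorSet G ψ (swapColors a b S) + 1 ∧
      (nColorSet G ψ' (swapColors a b T) : ℤ) = nColorSet G ψ (swapColors a b T) - 1 ∧
      ∀ W, W ≠ S → W ≠ swapColors a b S → W ≠ swapColors a b T →
        (nColorSet G ψ' W : ℤ) = nColorSet G ψ W + if W = T then 1 else 0 := by
  have hσT_S : swapColors a b T ≠ S := fun h => hσS_T (swapColors_eq_iff.mp h).symm
  have hσSS : swapColors a b S ≠ S := ne_of_mem_of_not_mem' (mem_swapColors_right.mpr haS) hbS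
  have hσTT : swapColors a b T ≠ T := ne_of_mem_of_not_mem' (mem_swapColors_left.mpr hbT) haT
  have hσST : swapColors a b S ≠ swapColors a b T :=
    swapColors_injective.ne (ne_of_mem_of_not_mem' haS haT)
  refine ⟨?_, ?_, fun W hWS hWσS hWσT => ?_⟩
  · simp only [hN, transfer, swapColors_swapColors, if_true, if_neg hσSS, if_neg hσST,
      if_neg hσS_T]
    ring
  · simp only [hN, transfer, swapColors_swapColors, if_true, if_neg hσT_S, if_neg hσST.symm,
      if_neg hσTT]
    ring
  · simp only [hN, transfer, swapColors_swapColors, if_neg hWS, if_neg hWσS, if_neg hWσT]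
    ring

theorem kempeFlow_union [DecidableEq V] {C D : Finset V} (h : Disjoint C D) :
    kempeFlow G ψ a b (C ∪ D) = kempeFlow G ψ a b C + kempeFlow G ψ a b D := by
  ext W
  simp only [kempeFlow, sum_union h, Pi.add_apply]

end Counting

section KempeChains

variable {V : Type*} [Fintype V] {G : SimpleGraph V} {k : ℕ} {ψ : Sym2 V → ℕ} {a b : ℕ}

open Classical in
theorem degree_kempeGraph [DecidableRel (kempeGraph G ψ a b).Adj] (hψ : IsEdgeKColoring G k ψ)
    (v : V) :
    (kempeGraph G ψ a b).degree v = #{c ∈ ({a, b} : Finset ℕ) | c ∈ colorSet G ψ v} := by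
  rw [← SimpleGraph.card_neighborFinset_eq_degree,
    ← card_image_of_injOn (f := fun w => ψ s(v, w))]
  · congr 1
    ext c
    rw [Finset.mem_filter, mem_insert, mem_singleton, mem_image]
    simp only [SimpleGraph.mem_neighborFinset, colorSet]
    constructor
    · rintro ⟨w, ⟨hadj, hc⟩, rfl⟩
      exact ⟨hc, s(v, w), hadj, Sym2.mem_mk_left v w, rfl⟩
    · rintro ⟨hc, e, he, hve, rfl⟩
      obtain ⟨w, rfl⟩ := Sym2.mem_iff_exists.mp hve
      exact ⟨w, ⟨he, hc⟩, rfl⟩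
  · intro w₁ hw₁ w₂ hw₂ h
    rw [mem_coe, SimpleGraph.mem_neighborFinset] at hw₁ hw₂
    by_contra hne
    exact hψ.2 _ hw₁.1 _ hw₂.1 (fun h => hne (Sym2.congr_right.mp h))
      ⟨v, Sym2.mem_mk_left v w₁, Sym2.mem_mk_left v w₂⟩ h

theorem degree_kempeGraph_le_two [DecidableRel (kempeGraph G ψ a b).Adj]
    (hψ : IsEdgeKColoring G k ψ) (v : V) : (kempeGraph G ψ a b).degree v ≤ 2 := by
  classical
  rw [degree_kempeGraph hψ]
  exact (card_filter_le _ _).trans card_le_two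

theorem degree_kempeGraph_eq_one_iff [DecidableRel (kempeGraph G ψ a b).Adj]
    (hψ : IsEdgeKColoring G k ψ) (hab : a ≠ b) (v : V) :
    (kempeGraph G ψ a b).degree v = 1 ↔ ¬(a ∈ colorSet G ψ v ↔ b ∈ colorSet G ψ v) := by
  classical
  rw [degree_kempeGraph hψ]
  by_cases ha : a ∈ colorSet G ψ v <;> by_cases hb : b ∈ colorSet G ψ v <;>
    simp [filter_insert, filter_singleton, ha, hb, hab]

open Classical in
theorem isKempeClosed_reachable (u : V) :
    IsKempeClosed G ψ a b {v | (kempeGraph G ψ a b).Reachable u v} := by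
  intro v w hvw hv
  rw [mem_filter] at hv ⊢
  exact ⟨mem_univ w, hv.2.trans hvw.reachable⟩

open Classical in
/-- The Kempe chain of a vertex `u` with exactly one of the colours `a`, `b` is a path, and only
its two ends change colour class when it is swapped. -/
theorem exists_kempeFlow_reachable (hψ : IsEdgeKColoring G k ψ) (hab : a ≠ b) {u : V}
    (hu : ¬(a ∈ colorSet G ψ u ↔ b ∈ colorSet G ψ u)) :
    ∃ w ≠ u, ¬(a ∈ colorSet G ψ w ↔ b ∈ colorSet G ψ w) ∧
      kempeFlow G ψ a b {v | (kempeGraph G ψ a b).Reachable u v} =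
        vertexFlow G ψ a b u + vertexFlow G ψ a b w := by
  classical
  set H := kempeGraph G ψ a b
  have hleaf := degree_kempeGraph_eq_one_iff hψ hab
  set L := {v | H.Reachable u v ∧ H.degree v = 1}
  have huL : u ∈ L := ⟨SimpleGraph.Reachable.refl u, (hleaf u).mpr hu⟩
  have hL1 : (L \ {u}).ncard = 1 := by
    rw [Set.ncard_sdiff_singleton_of_mem huL,
      SimpleGraph.ncard_reachable_degree_eq_one (degree_kempeGraph_le_two hψ) ((hleaf u).mpr hu)]
  obtain ⟨w, hw⟩ := Set.ncard_eq_one.mp hL1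
  have hwu : w ≠ u := (hw ▸ Set.mem_singleton w : w ∈ L \ {u}).2
  have hL : L = {u, w} := by rw [← Set.insert_eq_of_mem huL, ← Set.insert_sdiff_singleton, hw]
  have hwL : w ∈ L := hL ▸ Set.mem_insert_of_mem u rfl
  refine ⟨w, hwu, (hleaf w).mp hwL.2, ?_⟩
  have hsub : ({u, w} : Finset V) ⊆ ({v | H.Reachable u v} : Finset V) := by
    intro v hv
    rw [mem_filter]
    rcases mem_insert.mp hv with rfl | hv
    · exact ⟨mem_univ _, huL.1⟩
    · exact ⟨mem_univ _, mem_singleton.mp hv ▸ hwL.1⟩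
  ext W
  rw [kempeFlow, ← sum_subset hsub, sum_pair hwu.symm, Pi.add_apply]
  intro v hv hvuw
  have hvL : v ∉ L := by rw [hL]; simpa using hvuw
  have hdeg : H.degree v ≠ 1 := fun h => hvL ⟨(mem_filter.mp hv).2, h⟩
  rw [vertexFlow_eq_zero (not_not.mp (mt (hleaf v).mpr hdeg)), Pi.zero_apply]

end KempeChains

section Exchange

variable {V : Type*} [Fintype V] {G : SimpleGraph V} {k : ℕ} {ψ : Sym2 V → ℕ} {a b : ℕ}
  {S X : Finset ℕ} {C : Finset V}

theorem kempeFlow_le_of_forall_mem (h : ∀ v, colorSet G ψ v = swapColors a b X → v ∈ C) :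
    kempeFlow G ψ a b C X ≤ (nColorSet G ψ X : ℤ) - nColorSet G ψ (swapColors a b X) := by
  classical
  simp only [kempeFlow, vertexFlow, sum_sub_distrib, nColorSet_eq_sum]
  exact sub_le_sub (sum_le_sum_of_subset_of_nonneg (subset_univ C) fun _ _ _ => by positivity)
    (sum_subset (subset_univ C) fun v _ hv => if_neg fun hv' => hv (h v hv')).ge

/-- Take `C` maximal: an unused vertex of class `swapColors a b X` would start a further Kempe
chain, ending in some class `Y`, and adding it would give the flow `transfer S + transfer Y`. -/
theorem exists_isKempeClosed_kempeFlow_eq (hψ : IsEdgeKColoring G k ψ) (ha : a ∈ Icc 1 k)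
    (hb : b ∈ Icc 1 k) (hab : a ≠ b) (hS : S ⊆ Icc 1 k) (hSσ : swapColors a b S ≠ S) :
    ∃ C X, IsKempeClosed G ψ a b C ∧ X ⊆ Icc 1 k ∧ swapColors a b X ≠ X ∧
      kempeFlow G ψ a b C = transfer a b S + transfer a b X ∧
      ∀ v, colorSet G ψ v = swapColors a b X → v ∈ C := by
  classical
  let P : Finset V → Prop := fun C => IsKempeClosed G ψ a b C ∧ ∃ X ⊆ Icc 1 k,
    swapColors a b X ≠ X ∧ kempeFlow G ψ a b C = transfer a b S + transfer a b X
  have hP₀ : P ∅ := by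
    refine ⟨fun _ _ _ h => absurd h (notMem_empty _), swapColors a b S,
      swapColors_subset_Icc hS ha hb, by rwa [swapColors_swapColors, ne_comm], ?_⟩
    ext W
    simp [kempeFlow, transfer_swapColors]
  obtain ⟨C, hC, hmax⟩ := ({C | P C} : Finset (Finset V)).exists_max_image card
    ⟨∅, mem_filter.mpr ⟨mem_univ _, hP₀⟩⟩
  obtain ⟨hCc, X, hX, hXσ, hflow⟩ := (mem_filter.mp hC).2
  refine ⟨C, X, hCc, hX, hXσ, hflow, fun u hu => ?_⟩
  by_contra huC
  have hu_end : ¬(a ∈ colorSet G ψ u ↔ b ∈ colorSet G ψ u) := by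
    rw [hu, mem_coe, mem_coe, ← swapColors_eq_self_iff, swapColors_swapColors]
    exact hXσ.symm
  obtain ⟨w, hwu, hw_end, hDflow⟩ := exists_kempeFlow_reachable hψ hab hu_end
  obtain ⟨Y, hY, hYw⟩ := exists_finset_coe_eq_colorSet hψ w
  set D : Finset V := {v | (kempeGraph G ψ a b).Reachable u v}
  have hdisj : Disjoint C D := disjoint_left.mpr fun v hvC hvD =>
    huC (hCc.mem_of_reachable (mem_filter.mp hvD).2.symm hvC)
  have hPCD : P (C ∪ D) := by
    refine ⟨hCc.union (isKempeClosed_reachable u), Y, hY, ?_, ?_⟩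
    · rwa [Ne, swapColors_eq_self_iff, ← mem_coe, ← mem_coe, hYw]
    · rw [kempeFlow_union hdisj, hflow, hDflow, vertexFlow_of_colorSet_eq hu,
        vertexFlow_of_colorSet_eq hYw.symm, transfer_swapColors]
      abel
  have hlt : #C < #(C ∪ D) := card_lt_card <| ssubset_iff_of_subset subset_union_left |>.mpr
    ⟨u, mem_union_right _ (by simp [D]), huC⟩
  exact (hmax _ (mem_filter.mpr ⟨mem_univ _, hPCD⟩)).not_gt hlt

end Exchange

section Optimal

variable {V : Type*} [Fintype V] {G : SimpleGraph V} {k : ℕ} {ψ : Sym2 V → ℕ} {a b : ℕ}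
  {S X : Finset ℕ} {C : Finset V}

def IsOptimalColoring (G : SimpleGraph V) (k : ℕ) (ψ : Sym2 V → ℕ) : Prop :=
  IsEdgeKColoring G k ψ ∧ ∀ ψ', IsEdgeKColoring G k ψ' → colSum G k ψ ≤ colSum G k ψ'

theorem colSum_kempeSwap_sub_colSum (hC : IsKempeClosed G ψ a b C) (ha : a ∈ Icc 1 k)
    (hb : b ∈ Icc 1 k) (hS : S ⊆ Icc 1 k) (hX : X ⊆ Icc 1 k) (hSσ : swapColors a b S ≠ S)
    (hXσ : swapColors a b X ≠ X) (hXS : X ≠ swapColors a b S)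
    (hflow : kempeFlow G ψ a b C = transfer a b S + transfer a b X) :
    (colSum G k (kempeSwap ψ a b C) : ℤ) - colSum G k ψ =
      4 + 4 * (if X = S then 1 else 0) -
        2 * ((nColorSet G ψ S - nColorSet G ψ (swapColors a b S) : ℤ) +
          (nColorSet G ψ X - nColorSet G ψ (swapColors a b X))) := by
  have hcount : ∀ W : Finset ℕ, (nColorSet G (kempeSwap ψ a b C) W : ℤ) =
      nColorSet G ψ W - (transfer a b S W + transfer a b X W) :=
    fun W => by rw [nColorSet_kempeSwap hC, hflow, Pi.add_apply]
  rw [colSum_sub_colSum hcount]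
  simp only [mul_add, sum_add_distrib, sum_mul_transfer hS ha hb, sum_mul_transfer hX ha hb]
  have hσXS : swapColors a b X ≠ S := mt swapColors_eq_iff.mp hXS
  rcases eq_or_ne X S with rfl | hXS'
  · simp only [transfer, if_true, if_neg hSσ, if_neg hSσ.symm]
    ring
  · have hσ : swapColors a b X ≠ swapColors a b S := swapColors_injective.ne hXS'
    simp only [transfer, if_true, if_neg hSσ, if_neg hSσ.symm, if_neg hXσ, if_neg hXσ.symm,
      if_neg hXS', if_neg hXS'.symm, if_neg hXS, if_neg hXS.symm, if_neg hσXS, if_neg hσXS.symm,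
      if_neg hσ, if_neg hσ.symm]
    ring

/-- `n X - n (σ X) ≥ 1 + [X = S]` since every vertex of class `σ X` is swapped, and then
optimality leaves the two outcomes below. -/
theorem IsOptimalColoring.exists_exchange (hopt : IsOptimalColoring G k ψ) (ha : a ∈ Icc 1 k)
    (hb : b ∈ Icc 1 k) (hS : S ⊆ Icc 1 k)
    (hd : nColorSet G ψ (swapColors a b S) < nColorSet G ψ S) :
    ∃ X ψ', IsOptimalColoring G k ψ' ∧
      (∀ W : Finset ℕ, (nColorSet G ψ' W : ℤ) =
        nColorSet G ψ W - transfer a b S W - transfer a b X W) ∧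
      ((X = S ∧ nColorSet G ψ S = nColorSet G ψ (swapColors a b S) + 2) ∨
       (X ≠ S ∧ X ≠ swapColors a b S ∧
        nColorSet G ψ S = nColorSet G ψ (swapColors a b S) + 1 ∧
        nColorSet G ψ X = nColorSet G ψ (swapColors a b X) + 1)) := by
  have hSσ : swapColors a b S ≠ S := fun h => by rw [h] at hd; exact lt_irrefl _ hd
  have hab : a ≠ b := by
    rintro rfl
    exact hSσ (swapColors_eq_self_iff.mpr Iff.rfl)
  obtain ⟨C, X, hC, hX, hXσ, hflow, hused⟩ :=
    exists_isKempeClosed_kempeFlow_eq hopt.1 ha hb hab hS hSσ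
  have hdX := kempeFlow_le_of_forall_mem hused
  rw [hflow, Pi.add_apply] at hdX
  have hXS' : X ≠ swapColors a b S := by
    rintro rfl
    simp only [transfer, swapColors_swapColors, if_true, if_neg hSσ] at hdX
    omega
  have hΔ := colSum_kempeSwap_sub_colSum hC ha hb hS hX hSσ hXσ hXS' hflow
  have hproper := isEdgeKColoring_kempeSwap hopt.1 ha hb hC
  have hmin : (colSum G k ψ : ℤ) ≤ colSum G k (kempeSwap ψ a b C) := by
    exact_mod_cast hopt.2 _ hproper
  have key : colSum G k (kempeSwap ψ a b C) = colSum G k ψ ∧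
      ((X = S ∧ nColorSet G ψ S = nColorSet G ψ (swapColors a b S) + 2) ∨
       (X ≠ S ∧ X ≠ swapColors a b S ∧
        nColorSet G ψ S = nColorSet G ψ (swapColors a b S) + 1 ∧
        nColorSet G ψ X = nColorSet G ψ (swapColors a b X) + 1)) := by
    rcases eq_or_ne X S with rfl | hXS
    · simp only [transfer, if_true, if_neg hXσ.symm] at hΔ hdX
      exact ⟨by omega, Or.inl ⟨rfl, by omega⟩⟩
    · simp only [transfer, if_true, if_neg hXS, if_neg hXS', if_neg hXσ.symm] at hΔ hdX
      exact ⟨by omega, Or.inr ⟨hXS, hXS', by omega, by omega⟩⟩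
  refine ⟨X, kempeSwap ψ a b C, ⟨hproper, fun ψ' hψ' => key.1 ▸ hopt.2 ψ' hψ'⟩,
    fun W => ?_, key.2⟩
  rw [nColorSet_kempeSwap hC, hflow, Pi.add_apply]
  ring

end Optimal

section Balanced

variable {V : Type*} [Fintype V] {G : SimpleGraph V} {k m : ℕ} {ψ : Sym2 V → ℕ} {x y : ℕ}
  {S T U : Finset ℕ}

theorem IsOptimalColoring.nColorSet_le_swapColors_add_two (hopt : IsOptimalColoring G k ψ)
    (hx : x ∈ Icc 1 k) (hy : y ∈ Icc 1 k) (hS : S ⊆ Icc 1 k) :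
    nColorSet G ψ S ≤ nColorSet G ψ (swapColors x y S) + 2 := by
  by_contra! h
  obtain ⟨X, -, -, -, hcase⟩ := hopt.exists_exchange hx hy hS (by omega)
  rcases hcase with ⟨-, h2⟩ | ⟨-, -, h1, -⟩ <;> omega

def IsBalancedUpTo (G : SimpleGraph V) (k m : ℕ) : Prop :=
  ∀ ψ, IsOptimalColoring G k ψ → ∀ S T : Finset ℕ, S ⊆ Icc 1 k → T ⊆ Icc 1 k →
    #S = #T → #(S \ T) ≤ m → nColorSet G ψ S ≤ nColorSet G ψ T + 2

/-- Any outcome of the exchange other than the partner class of `T` would leave `σ S`, at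
distance `m` from `T`, three ahead of `T`. -/
theorem IsOptimalColoring.exists_shift (ih : IsBalancedUpTo G k m) (hm : 1 ≤ m)
    (hopt : IsOptimalColoring G k ψ) (hS : S ⊆ Icc 1 k) (hT : T ⊆ Icc 1 k) (hcard : #S = #T)
    (hST : #(S \ T) = m + 1) (hgap : nColorSet G ψ T + 3 ≤ nColorSet G ψ S)
    (hxS : x ∈ S) (hxT : x ∉ T) (hyT : y ∈ T) (hyS : y ∉ S) :
    nColorSet G ψ (swapColors x y S) + 1 = nColorSet G ψ S ∧
      nColorSet G ψ (swapColors x y T) = nColorSet G ψ T + 1 ∧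
      ∃ ψ', IsOptimalColoring G k ψ' ∧ ∀ W : Finset ℕ, (nColorSet G ψ' W : ℤ) =
        nColorSet G ψ W - transfer x y S W - transfer x y (swapColors x y T) W := by
  have hx := hS hxS
  have hy := hT hyT
  have hσS := swapColors_subset_Icc hS hx hy
  have hσST : #(swapColors x y S \ T) = m := by
    have := card_swapColors_sdiff hxS hxT hyT hyS; omega
  have hbal := ih ψ hopt _ T hσS hT (card_swapColors.trans hcard) hσST.le
  obtain ⟨X, ψ', hopt', hN', hcase⟩ := hopt.exists_exchange hx hy hS (by omega)
  have hTS : T ≠ S := (ne_of_mem_of_not_mem' hxS hxT).symm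
  have hTσS : T ≠ swapColors x y S := by
    rintro rfl; rw [Finset.sdiff_self, card_empty] at hσST; omega
  have hσSS : swapColors x y S ≠ S := ne_of_mem_of_not_mem' (mem_swapColors_right.mpr hxS) hyS
  have hbal' := ih ψ' hopt' _ T hσS hT (card_swapColors.trans hcard) hσST.le
  have hNσS := hN' (swapColors x y S)
  have hNT := hN' T
  rcases hcase with ⟨rfl, h2⟩ | ⟨hXS, hXσS, h1, hX⟩
  · simp only [transfer, if_true, if_neg hTS, if_neg hTσS, if_neg hσSS] at hNσS hNT
    omega
  by_cases hXT : X = swapColors x y T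
  · subst hXT
    rw [swapColors_swapColors] at hX
    exact ⟨by omega, hX, ψ', hopt', hN'⟩
  have hσ : swapColors x y S ≠ swapColors x y X := swapColors_injective.ne (Ne.symm hXS)
  have hTσX : T ≠ swapColors x y X := fun h => hXT (swapColors_eq_iff.mp h.symm)
  simp only [transfer, if_true, if_neg hTS, if_neg hTσS, if_neg hσSS, if_neg hσ,
    if_neg (Ne.symm hXσS), if_neg hTσX] at hNσS hNT
  split_ifs at hNT <;> omega

structure IsBetween (k m : ℕ) (S T U : Finset ℕ) : Prop where
  subset_left : S ⊆ Icc 1 k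
  subset_right : T ⊆ Icc 1 k
  card_eq : #S = #T
  card_between : #U = #S
  card_sdiff : #(S \ T) = m + 1
  inter_subset : S ∩ T ⊆ U
  subset_union : U ⊆ S ∪ T

theorem IsBetween.notMem_right (h : IsBetween k m S T U) (hxS : x ∈ S) (hxU : x ∉ U) :
    x ∉ T :=
  fun hxT => hxU (h.inter_subset (mem_inter.mpr ⟨hxS, hxT⟩))

theorem IsBetween.mem_right (h : IsBetween k m S T U) (hyU : y ∈ U) (hyS : y ∉ S) : y ∈ T :=
  (mem_union.mp (h.subset_union hyU)).resolve_left hyS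

theorem IsBetween.swapColors (h : IsBetween k m S T U) (hxS : x ∈ S) (hxU : x ∉ U)
    (hyU : y ∈ U) (hyS : y ∉ S) : IsBetween k m (swapColors x y S) (swapColors x y T) U := by
  have hxT := h.notMem_right hxS hxU
  have hyT := h.mem_right hyU hyS
  have hx := h.subset_left hxS
  have hy := h.subset_right hyT
  refine ⟨swapColors_subset_Icc h.subset_left hx hy, swapColors_subset_Icc h.subset_right hx hy,
    by rw [card_swapColors, card_swapColors, h.card_eq], by rw [card_swapColors, h.card_between],
    by rw [← swapColors_sdiff, card_swapColors, h.card_sdiff], ?_, ?_⟩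
  · rw [← swapColors_inter, swapColors_eq_self_iff.mpr (by simp [hxT, hyS])]
    exact h.inter_subset
  · rw [← swapColors_union, swapColors_eq_self_iff.mpr (by simp [hxS, hyT])]
    exact h.subset_union

structure IsGapTriple (G : SimpleGraph V) (k m : ℕ) (ψ : Sym2 V → ℕ) (S T U : Finset ℕ) :
    Prop extends IsBetween k m S T U where
  optimal : IsOptimalColoring G k ψ
  gap : nColorSet G ψ T + 3 ≤ nColorSet G ψ S
  gap_between : nColorSet G ψ U + 2 ≤ nColorSet G ψ S

/-- The shift moves `S` one step towards `U` and `T` one step away from it, keeping both gaps. -/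
theorem IsGapTriple.exists_closer (ih : IsBalancedUpTo G k m) (hm : 1 ≤ m)
    (h : IsGapTriple G k m ψ S T U) :
    ∃ ψ' S' T', IsGapTriple G k m ψ' S' T' U ∧ #(S' \ U) < #(S \ U) := by
  have hSU : S ≠ U := by rintro rfl; have := h.gap_between; omega
  obtain ⟨x, hx⟩ : (S \ U).Nonempty := by
    rw [nonempty_iff_ne_empty, Ne, sdiff_eq_empty_iff_subset]
    exact fun hsub => hSU (eq_of_subset_of_card_le hsub h.card_between.le)
  obtain ⟨y, hy⟩ : (U \ S).Nonempty := by
    rw [← card_pos, card_sdiff_comm h.card_between]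
    exact card_pos.mpr ⟨x, hx⟩
  obtain ⟨hxS, hxU⟩ := mem_sdiff.mp hx
  obtain ⟨hyU, hyS⟩ := mem_sdiff.mp hy
  have hxT := h.notMem_right hxS hxU
  have hyT := h.mem_right hyU hyS
  obtain ⟨h1, h2, ψ', hopt', hN'⟩ := h.optimal.exists_shift ih hm h.subset_left h.subset_right
    h.card_eq h.card_sdiff h.gap hxS hxT hyT hyS
  have hUσS : U ≠ swapColors x y S := by
    rintro rfl; have := h.gap_between; omega
  have hσS_T : swapColors x y S ≠ T := by
    intro hσ
    have := card_swapColors_sdiff hxS hxT hyT hyS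
    rw [hσ, Finset.sdiff_self, card_empty, h.card_sdiff] at this
    omega
  have hUσT : U ≠ swapColors x y T :=
    (ne_of_mem_of_not_mem' (mem_swapColors_left.mpr hyT) hxU).symm
  obtain ⟨hNS, hNT, hNW⟩ := nColorSet_of_transfer_add_transfer hN' hxS hxT hyT hyS hσS_T
  have hNU := hNW U hSU.symm hUσS hUσT
  have := h.gap
  have := h.gap_between
  refine ⟨ψ', _, _, ⟨h.swapColors hxS hxU hyU hyS, hopt', by omega, ?_⟩,
    by have := card_swapColors_sdiff hxS hxU hyU hyS; omega⟩
  split_ifs at hNU with hUT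
  · subst hUT; omega
  · omega

theorem IsGapTriple.false {ψ : Sym2 V → ℕ} {S T U : Finset ℕ} (ih : IsBalancedUpTo G k m)
    (hm : 1 ≤ m) (h : IsGapTriple G k m ψ S T U) : False := by
  obtain ⟨ψ', S', T', h', hlt⟩ := h.exists_closer ih hm
  exact h'.false ih hm
termination_by #(S \ U)

theorem isBalancedUpTo (G : SimpleGraph V) (k : ℕ) : ∀ m, IsBalancedUpTo G k m
  | 0 => fun ψ _ S T _ _ hcard hST => by
    have hsub : S ⊆ T := sdiff_eq_empty_iff_subset.mp (card_eq_zero.mp (Nat.le_zero.mp hST))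
    rw [eq_of_subset_of_card_le hsub hcard.ge]
    exact Nat.le_add_right _ _
  | m + 1 => fun ψ hopt S T hS hT hcard hST => by
    have ih := isBalancedUpTo G k m
    rcases hST.lt_or_eq with hlt | heq
    · exact ih ψ hopt S T hS hT hcard (Nat.le_of_lt_succ hlt)
    by_contra! hgap
    obtain ⟨x, hx⟩ := card_pos.mp (by omega : 0 < #(S \ T))
    obtain ⟨y, hy⟩ := card_pos.mp (by rw [← card_sdiff_comm hcard]; omega : 0 < #(T \ S))
    obtain ⟨hxS, hxT⟩ := mem_sdiff.mp hx
    obtain ⟨hyT, hyS⟩ := mem_sdiff.mp hy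
    rcases Nat.eq_zero_or_pos m with rfl | hm
    · have hσ := swapColors_eq_of_card_sdiff_eq_one hcard heq hxS hxT hyT hyS
      have := hopt.nColorSet_le_swapColors_add_two (hS hxS) (hT hyT) hS
      rw [hσ] at this
      omega
    · exact IsGapTriple.false ih hm ⟨⟨hS, hT, hcard, hcard.symm, heq, inter_subset_right,
        subset_union_right⟩, hopt, by omega, by omega⟩

end Balanced

theorem optimal_coloring_balanced_general {V : Type*} [Fintype V]
    (G : SimpleGraph V) (k : ℕ)
    (φ : Sym2 V → ℕ) (hφ : IsEdgeKColoring G k φ)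
    (hopt : ∀ φ' : Sym2 V → ℕ, IsEdgeKColoring G k φ' → colSum G k φ ≤ colSum G k φ')
    (S S' : Finset ℕ) (hS : S ⊆ Finset.Icc 1 k) (hS' : S' ⊆ Finset.Icc 1 k)
    (hcard : S.card = S'.card) :
    |(nColorSet G φ (↑S : Set ℕ) : ℤ) - (nColorSet G φ (↑S' : Set ℕ) : ℤ)| ≤ 2 := by
  have hoptimal : IsOptimalColoring G k φ := ⟨hφ, hopt⟩
  have h₁ := isBalancedUpTo G k _ φ hoptimal S S' hS hS' hcard le_rfl
  have h₂ := isBalancedUpTo G k _ φ hoptimal S' S hS' hS hcard.symm le_rfl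
  rw [abs_le]
  omega

/-- Theorem (Balister–Kostochka–Li–Schelp): in any optimal edge-`k`-coloring `φ` of `G`
(with `k ≥ χ'(G)`), `|n_φ^S − n_φ^{S'}| ≤ 2` for all `S, S' ⊆ {1,…,k}` with `|S| = |S'|`. -/
theorem optimal_coloring_balanced {V : Type*} [Fintype V]
    (G : SimpleGraph V) (k : ℕ) (hk : edgeChromaticIndex G ≤ k)
    (φ : Sym2 V → ℕ) (hφ : IsEdgeKColoring G k φ)
    (hopt : ∀ φ' : Sym2 V → ℕ, IsEdgeKColoring G k φ' → colSum G k φ ≤ colSum G k φ')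
    (S S' : Finset ℕ) (hS : S ⊆ Finset.Icc 1 k) (hS' : S' ⊆ Finset.Icc 1 k)
    (hcard : S.card = S'.card) :
    |(nColorSet G φ (↑S : Set ℕ) : ℤ) - (nColorSet G φ (↑S' : Set ℕ) : ℤ)| ≤ 2 :=
  optimal_coloring_balanced_general G k φ hφ hopt S S' hS hS' hcard
end

section
/- Let D be a sun on at least 3 vertices (hence D has at least 6 vertices). Then D has a subgraph F₁ each of whose components is a path on 4 or 5 vertices, such that F₁ covers every vertex of D except a single vertex y whose degree in D is one, and the (unique) neighbor of y in D has degree 2 in F₁. -/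
/-- A graph is factor-critical if deleting any vertex leaves a graph with a perfect
matching. -/
def IsFactorCritical {W : Type*} (R : SimpleGraph W) : Prop :=
  ∀ x : W, ∃ M : (R.induce {y : W | y ≠ x}).Subgraph, M.IsPerfectMatching

/-- `H` is a sun: `H = K₁`, `H = K₂`, or `H` is obtained from a factor-critical graph `R`
(its core, here an induced subgraph on a vertex set `R`) by attaching to each core vertex
`v` a pendant vertex `p v` whose unique neighbor is `v`. -/
def IsSun {W : Type*} (H : SimpleGraph W) : Prop :=
  Nat.card W = 1 ∨
  (Nat.card W = 2 ∧ ∀ u v : W, u ≠ v → H.Adj u v) ∨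
  ∃ (R : Set W) (p : R ≃ (Rᶜ : Set W)),
    IsFactorCritical (H.induce R) ∧
    (∀ v : R, H.Adj (↑v) (↑(p v))) ∧
    (∀ u : (Rᶜ : Set W), ∀ x : W, H.Adj (↑u) x ↔ x = ↑(p.symm u))

/-- The number of connected components of `G − S` that are suns. -/
noncomputable def sunCount {V : Type*} [Fintype V] (G : SimpleGraph V) (S : Set V) : ℕ :=
  Nat.card {c : (G.induce Sᶜ).ConnectedComponent //
    IsSun ((G.induce Sᶜ).induce c.supp)}

/-- `H` has a `{P₃, P₄, P₅}`-factor: a spanning subgraph each of whose components is a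
path on 3, 4, or 5 vertices. -/
def HasPPPFactor {W : Type*} (H : SimpleGraph W) : Prop :=
  ∃ F : SimpleGraph W, F ≤ H ∧ ∀ c : F.ConnectedComponent,
    IsPathOn (F.induce c.supp) 3 ∨ IsPathOn (F.induce c.supp) 4 ∨ IsPathOn (F.induce c.supp) 5

/-!
The core `R` of the sun is factor-critical with at least two vertices, so it contains an edge
`x u`, and `R - u` has a perfect matching `M`. The matching edge `x (M x)`, extended by `u` and by
the pendants of `M x` and `u`, is the path `p(M x), M x, x, u, p(u)` on five vertices; every other
matching edge `t (M t)` gives the path `p(t), t, M t, p(M t)` on four vertices. These paths are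
vertex-disjoint and cover every vertex except the pendant `y = p(x)`, whose neighbour `x` is an
inner vertex of the five-vertex path.
-/

open Set Function SimpleGraph

namespace SimpleGraph

section DisjointUnion

variable {ι V : Type*} {W : ι → Type*} {G : ∀ k, SimpleGraph (W k)} {f : ∀ k, W k ↪ V}

theorem support_iSup_map : (⨆ k, (G k).map (f k)).support = ⋃ k, f k '' (G k).support := by
  ext v
  simp only [mem_support, iSup_adj, map_adj, mem_iUnion, mem_image]
  constructor
  · rintro ⟨_, k, a, b, hab, rfl, rfl⟩
    exact ⟨k, a, ⟨b, hab⟩, rfl⟩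
  · rintro ⟨k, a, ⟨b, hab⟩, rfl⟩
    exact ⟨f k b, k, a, b, hab, rfl, rfl⟩

variable (hf : Pairwise (Disjoint on fun k => range (f k)))
include hf

theorem neighborSet_iSup_map (k : ι) (a : W k) :
    (⨆ k, (G k).map (f k)).neighborSet (f k a) = f k '' (G k).neighborSet a := by
  ext v
  simp only [mem_neighborSet, iSup_adj, map_adj, mem_image]
  constructor
  · rintro ⟨k', a', b, hab, ha, rfl⟩
    obtain rfl : k' = k := by
      by_contra hk
      exact Set.disjoint_left.1 (hf hk) ⟨a', rfl⟩ ⟨a, ha.symm⟩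
    exact ⟨b, by rwa [← (f k').injective ha], rfl⟩
  · rintro ⟨b, hab, rfl⟩
    exact ⟨k, a, b, hab, rfl, rfl⟩

theorem iSup_map_adj_iff {k : ι} {a b : W k} :
    (⨆ k, (G k).map (f k)).Adj (f k a) (f k b) ↔ (G k).Adj a b := by
  rw [← mem_neighborSet, neighborSet_iSup_map hf, (f k).injective.mem_set_image, mem_neighborSet]

theorem connectedComponentMk_supp_iSup_map {k : ι} (hG : (G k).Connected) (a : W k) :
    ((⨆ k, (G k).map (f k)).connectedComponentMk (f k a)).supp = range (f k) := by
  ext v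
  rw [ConnectedComponent.mem_supp_iff, ConnectedComponent.eq]
  constructor
  · rintro ⟨w⟩
    suffices ∀ x y (w : (⨆ k, (G k).map (f k)).Walk x y),
        x ∈ range (f k) → y ∈ range (f k) from
      this _ _ w.reverse ⟨a, rfl⟩
    intro x y w
    induction w with
    | nil => exact id
    | cons hxz _ ih =>
      rintro ⟨b, rfl⟩
      rw [← mem_neighborSet, neighborSet_iSup_map hf] at hxz
      exact ih (image_subset_range _ _ hxz)
  · rintro ⟨b, rfl⟩
    have hle : (G k).map (f k) ≤ ⨆ k, (G k).map (f k) := le_iSup (fun k => (G k).map (f k)) k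
    exact ((hG.preconnected b a).map (Embedding.map (f k) (G k)).toHom).mono hle

theorem exists_supp_eq_range_iSup_map (hG : ∀ k, (G k).Connected)
    (c : (⨆ k, (G k).map (f k)).ConnectedComponent) (hc : c.supp.Nontrivial) :
    ∃ k, c.supp = range (f k) := by
  obtain ⟨a, rfl, b, hb, hab⟩ := hc
  have ha := mem_support_of_reachable hab (ConnectedComponent.exact hb.symm)
  rw [support_iSup_map] at ha
  obtain ⟨k, a, -, rfl⟩ := mem_iUnion.1 ha
  exact ⟨k, connectedComponentMk_supp_iSup_map hf (hG k) a⟩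

theorem nonempty_induce_range_iSup_map_iso (k : ι) :
    Nonempty ((⨆ k, (G k).map (f k)).induce (range (f k)) ≃g G k) :=
  ⟨(⟨Equiv.ofInjective (f k) (f k).injective, iSup_map_adj_iff hf⟩ : G k ≃g _).symm⟩

end DisjointUnion

theorem support_pathGraph {n : ℕ} (hn : 2 ≤ n) : (pathGraph n).support = univ := by
  obtain ⟨m, rfl⟩ := Nat.exists_eq_add_of_le' hn
  exact (pathGraph_connected _).preconnected.support_eq_univ

theorem map_pathGraph_le {V : Type*} {G : SimpleGraph V} {n : ℕ} (f : Fin n ↪ V)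
    (h : ∀ i j : Fin n, i.val + 1 = j.val → G.Adj (f i) (f j)) : (pathGraph n).map f ≤ G := by
  intro v w hvw
  obtain ⟨i, j, hij, rfl, rfl⟩ := (map_adj _ _ _ _).1 hvw
  rcases pathGraph_adj.1 hij with hij | hij
  exacts [h i j hij, (h j i hij).symm]

end SimpleGraph

/-- A perfect matching of `G - u`, encoded as the involution exchanging the ends of its edges
and fixing `u`. -/
structure MatchingInvolution {W : Type*} (G : SimpleGraph W) (u : W) where
  toFun : W → W
  involutive : Involutive toFun
  map_root : toFun u = u
  adj : ∀ t ≠ u, G.Adj t (toFun t)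

namespace MatchingInvolution

variable {W : Type*} {G : SimpleGraph W} {u : W} (M : MatchingInvolution G u)

instance : CoeFun (MatchingInvolution G u) fun _ => W → W := ⟨toFun⟩

@[simp] lemma apply_apply (t : W) : M (M t) = t := M.involutive t

lemma apply_ne_self {t : W} (ht : t ≠ u) : M t ≠ t := fun h => (M.adj t ht).ne h.symm

lemma apply_ne_root {t : W} (ht : t ≠ u) : M t ≠ u :=
  fun h => ht (by rw [← M.apply_apply t, h]; exact M.map_root)

lemma disjoint_pair_root {t x : W} (htx : t ∉ ({x, M x} : Set W)) (htu : t ≠ u) :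
    Disjoint ({t, M t} : Set W) {M x, x, u} := by
  simp only [mem_insert_iff, mem_singleton_iff, not_or] at htx
  simp only [Set.disjoint_left, mem_insert_iff, mem_singleton_iff]
  rintro a (ha | ha) (h | h | h) <;> have e := ha.symm.trans h
  · exact htx.2 e
  · exact htx.1 e
  · exact htu e
  · exact htx.1 (M.involutive.injective e)
  · exact htx.2 (by rw [← e, M.apply_apply])
  · exact htu (by rw [← M.apply_apply t, e, M.map_root])

lemma disjoint_pair [LinearOrder W] {s t : W} (hs : s < M s) (ht : t < M t) (hst : s ≠ t) :
    Disjoint ({s, M s} : Set W) {t, M t} := by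
  simp only [Set.disjoint_left, mem_insert_iff, mem_singleton_iff]
  rintro a (ha | ha) (h | h) <;> have e := ha.symm.trans h
  · exact hst e
  · rw [e, M.apply_apply] at hs
    exact lt_asymm hs (e ▸ ht)
  · rw [← e, M.apply_apply] at ht
    exact lt_asymm hs ht
  · exact hst (M.involutive.injective e)

end MatchingInvolution

theorem IsFactorCritical.nonempty_matchingInvolution {W : Type*} {G : SimpleGraph W}
    (hG : IsFactorCritical G) (u : W) : Nonempty (MatchingInvolution G u) := by
  classical
  obtain ⟨M, hM⟩ := hG u
  rw [Subgraph.isPerfectMatching_iff] at hM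
  choose m hm using hM
  have hmm (t) : m (m t) = t := ((hm (m t)).2 t (hm t).1.symm).symm
  refine ⟨⟨fun t => if h : t = u then u else m ⟨t, h⟩, fun t => ?_, dif_pos rfl,
    fun t ht => ?_⟩⟩
  · by_cases ht : t = u
    · simp [ht]
    · have hmt : (m ⟨t, ht⟩ : W) ≠ u := (m ⟨t, ht⟩).2
      simp [ht, hmt, hmm]
  · simpa [ht] using M.adj_sub (hm ⟨t, ht⟩).1

theorem IsFactorCritical.exists_adj {W : Type*} [Nontrivial W] {G : SimpleGraph W}
    (hG : IsFactorCritical G) (x : W) : ∃ y, G.Adj x y := by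
  obtain ⟨u, hxu⟩ := exists_ne x
  obtain ⟨M⟩ := hG.nonempty_matchingInvolution u
  exact ⟨M x, M.adj x hxu.symm⟩

section Pendant

variable {V : Type*} {R : Set V} (p : R ≃ (Rᶜ : Set V))

@[simp] lemma pendant_ne_core (a b : R) : (p a : V) ≠ b := fun h => (p a).2 (h ▸ b.2)

@[simp] lemma core_ne_pendant (a b : R) : (a : V) ≠ p b := fun h => pendant_ne_core p b a h.symm

@[simp] lemma pendant_inj {a b : R} : (p a : V) = p b ↔ a = b := by
  rw [Subtype.val_inj, p.apply_eq_iff_eq]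

open Classical in
noncomputable def toCore (v : V) : R := if h : v ∈ R then ⟨v, h⟩ else p.symm ⟨v, h⟩

@[simp] lemma toCore_coe (a : R) : toCore p a = a := by simp [toCore]

@[simp] lemma toCore_pendant (a : R) : toCore p (p a) = a := by
  have : (p a : V) ∉ R := (p a).2
  simp [toCore, this]

lemma eq_core_or_eq_pendant (v : V) : v = toCore p v ∨ v = p (toCore p v) := by
  by_cases h : v ∈ R <;> simp [toCore, h]

end Pendant

section SunPacking

variable {V : Type*} {D : SimpleGraph V} {R : Set V} (p : R ≃ (Rᶜ : Set V))
  {u x : R} (M : MatchingInvolution (D.induce R) u) (hxu : (D.induce R).Adj x u)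

def rootPath : Fin 5 ↪ V :=
  ⟨![p (M x), M x, x, u, p u], by
    have h₁ := M.apply_ne_self hxu.ne
    have h₂ := M.apply_ne_root hxu.ne
    have h₃ := hxu.ne
    simp only [Matrix.vecCons, Fin.cons_injective_iff]
    simp [injective_of_subsingleton, h₁, h₂, h₃, Subtype.val_inj]⟩

lemma range_rootPath_subset : range (rootPath p M hxu) ⊆ toCore p ⁻¹' {M x, x, u} := by
  rintro _ ⟨i, rfl⟩
  fin_cases i <;> simp [rootPath]

lemma pendant_not_mem_range_rootPath : (p x : V) ∉ range (rootPath p M hxu) := by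
  rintro ⟨i, hi⟩
  have h₁ := M.apply_ne_self hxu.ne
  have h₂ := hxu.ne
  fin_cases i <;> simp [rootPath, h₁, h₂.symm] at hi

lemma map_rootPath_le (hpend : ∀ t : R, D.Adj t (p t)) :
    (pathGraph 5).map (rootPath p M hxu) ≤ D := by
  refine map_pathGraph_le _ fun i j hij => ?_
  have hxM : D.Adj (M x) x := (M.adj x hxu.ne).symm
  have hxu : D.Adj x u := hxu
  fin_cases i <;> fin_cases j <;> simp at hij <;> simp [rootPath, hpend, (hpend _).symm, hxM, hxu]

variable [LinearOrder R]

/-- A matched pair other than `{x, M x}`, represented by its smaller end. -/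
abbrev MatchingInvolution.OtherPair (x : R) : Type _ :=
  {t : R // t ∉ ({x, M x} : Set R) ∧ t < M t}

lemma MatchingInvolution.OtherPair.ne_root (t : M.OtherPair x) : t.1 ≠ u :=
  fun h => t.2.2.ne (by rw [h, M.map_root])

def pairPath (t : M.OtherPair x) : Fin 4 ↪ V :=
  ⟨![p t.1, t.1, M t.1, p (M t.1)], by
    have h := t.2.2.ne
    simp only [Matrix.vecCons, Fin.cons_injective_iff]
    simp [injective_of_subsingleton, h, Subtype.val_inj]⟩

lemma range_pairPath_subset (t : M.OtherPair x) :
    range (pairPath p M t) ⊆ toCore p ⁻¹' {t.1, M t.1} := by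
  rintro _ ⟨i, rfl⟩
  fin_cases i <;> simp [pairPath]

lemma map_pairPath_le (hpend : ∀ t : R, D.Adj t (p t)) (t : M.OtherPair x) :
    (pathGraph 4).map (pairPath p M t) ≤ D := by
  refine map_pathGraph_le _ fun i j hij => ?_
  have htM : D.Adj t.1 (M t.1) := M.adj t (t.ne_root M)
  fin_cases i <;> fin_cases j <;> simp at hij <;> simp [pairPath, hpend, (hpend _).symm, htM]

def sunPath : (k : Option (M.OtherPair x)) → Fin (k.elim 5 fun _ => 4) ↪ V
  | none => rootPath p M hxu
  | some t => pairPath p M t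

def sunPacking : SimpleGraph V :=
  ⨆ k, (pathGraph (k.elim 5 fun _ => 4)).map (sunPath p M hxu k)

def sunPathCore : Option (M.OtherPair x) → Set R
  | none => {M x, x, u}
  | some t => {t.1, M t.1}

lemma range_sunPath_subset : ∀ k : Option (M.OtherPair x),
    range (sunPath p M hxu k) ⊆ toCore p ⁻¹' sunPathCore M k
  | none => range_rootPath_subset p M hxu
  | some t => range_pairPath_subset p M t

lemma pairwise_disjoint_sunPathCore : Pairwise (Disjoint on sunPathCore M (x := x))
  | none, none, h => (h rfl).elim
  | none, some t, _ => (M.disjoint_pair_root t.2.1 (t.ne_root M)).symm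
  | some t, none, _ => M.disjoint_pair_root t.2.1 (t.ne_root M)
  | some s, some t, h => M.disjoint_pair s.2.2 t.2.2 fun e => h (congrArg some (Subtype.ext e))

lemma pairwise_disjoint_range_sunPath :
    Pairwise (Disjoint on fun k => range (sunPath p M hxu k)) := fun k l hkl =>
  ((pairwise_disjoint_sunPathCore M hkl).preimage _).mono
    (range_sunPath_subset p M hxu k) (range_sunPath_subset p M hxu l)

lemma pendant_not_mem_range_sunPath :
    ∀ k : Option (M.OtherPair x), (p x : V) ∉ range (sunPath p M hxu k)
  | none => pendant_not_mem_range_rootPath p M hxu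
  | some t => fun h => by
    have := range_pairPath_subset p M t h
    have htx := t.2.1
    simp only [mem_preimage, toCore_pendant, mem_insert_iff, mem_singleton_iff] at this htx
    rcases this with e | e
    · exact htx (.inl e.symm)
    · exact htx (.inr ((congrArg M e).trans (M.apply_apply _)).symm)

lemma exists_mem_range_sunPath {v : V} (hv : v ≠ p x) :
    ∃ k, v ∈ range (sunPath p M hxu k) := by
  have hc := eq_core_or_eq_pendant p v
  generalize toCore p v = c at hc
  by_cases hroot : c ∈ ({M x, x, u} : Set R)
  · refine ⟨none, ?_⟩
    simp only [mem_insert_iff, mem_singleton_iff] at hroot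
    rcases hroot with h | h | h <;> rcases hc with hv' | hv' <;> rw [h] at hv'
    · exact ⟨(1 : Fin 5), hv'.symm⟩
    · exact ⟨(0 : Fin 5), hv'.symm⟩
    · exact ⟨(2 : Fin 5), hv'.symm⟩
    · exact absurd hv' hv
    · exact ⟨(3 : Fin 5), hv'.symm⟩
    · exact ⟨(4 : Fin 5), hv'.symm⟩
  · simp only [mem_insert_iff, mem_singleton_iff, not_or] at hroot
    obtain ⟨hcM, hcx, hcu⟩ := hroot
    rcases (M.apply_ne_self hcu).lt_or_gt with h | h
    · have hMc : M c ∉ ({x, M x} : Set R) := by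
        simp only [mem_insert_iff, mem_singleton_iff, not_or]
        exact ⟨fun e => hcM (by rw [← e, M.apply_apply]),
          fun e => hcx (M.involutive.injective e)⟩
      refine ⟨some ⟨M c, hMc, by rwa [M.apply_apply]⟩, ?_⟩
      rcases hc with hv' | hv'
      · exact ⟨(2 : Fin 4), show ((M (M c) : R) : V) = v by rw [M.apply_apply, hv']⟩
      · exact ⟨(3 : Fin 4),
          show ((p (M (M c)) : (Rᶜ : Set V)) : V) = v by rw [M.apply_apply, hv']⟩
    · refine ⟨some ⟨c, by simp [hcx, hcM], h⟩, ?_⟩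
      rcases hc with hv' | hv'
      · exact ⟨(1 : Fin 4), hv'.symm⟩
      · exact ⟨(0 : Fin 4), hv'.symm⟩

lemma iUnion_range_sunPath : ⋃ k, range (sunPath p M hxu k) = {(p x : V)}ᶜ :=
  Subset.antisymm
    (iUnion_subset fun k => subset_compl_singleton_iff.2 (pendant_not_mem_range_sunPath p M hxu k))
    fun _ hv => mem_iUnion.2 (exists_mem_range_sunPath p M hxu hv)

lemma support_sunPacking : (sunPacking p M hxu).support = {(p x : V)}ᶜ := by
  rw [sunPacking, support_iSup_map, ← iUnion_range_sunPath p M hxu]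
  refine iUnion_congr fun k => ?_
  cases k <;> rw [support_pathGraph (by simp), image_univ]

lemma sunPacking_le (hpend : ∀ t : R, D.Adj t (p t)) : sunPacking p M hxu ≤ D :=
  iSup_le fun
    | none => map_rootPath_le p M hxu hpend
    | some t => map_pairPath_le p M hpend t

lemma isPathOn_sunPacking (c : (sunPacking p M hxu).ConnectedComponent) (hc : c.supp.Nontrivial) :
    IsPathOn ((sunPacking p M hxu).induce c.supp) 4 ∨
      IsPathOn ((sunPacking p M hxu).induce c.supp) 5 := by
  have hdisj := pairwise_disjoint_range_sunPath p M hxu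
  have hconn : ∀ k : Option (M.OtherPair x), (pathGraph (k.elim 5 fun _ => 4)).Connected
    | none => pathGraph_connected 4
    | some _ => pathGraph_connected 3
  obtain ⟨k, hk⟩ : ∃ k, c.supp = range (sunPath p M hxu k) :=
    exists_supp_eq_range_iSup_map hdisj hconn c hc
  rw [hk]
  cases k with
  | none => exact .inr (nonempty_induce_range_iSup_map_iso hdisj none)
  | some t => exact .inl (nonempty_induce_range_iSup_map_iso hdisj (some t))

lemma ncard_neighborSet_sunPacking : ((sunPacking p M hxu).neighborSet x).ncard = 2 := by
  have h : (sunPacking p M hxu).neighborSet x = rootPath p M hxu '' (pathGraph 5).neighborSet 2 :=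
    neighborSet_iSup_map (pairwise_disjoint_range_sunPath p M hxu) none (2 : Fin 5)
  have hnbr : (pathGraph 5).neighborSet 2 = {1, 3} := by
    ext i
    fin_cases i <;> simp [pathGraph_adj]
  rw [h, ncard_image_of_injective _ (rootPath p M hxu).injective, hnbr, ncard_pair (by decide)]

end SunPacking

theorem sun_P4P5_packing_general {V : Type*} (D : SimpleGraph V)
    (hcard : 3 ≤ Nat.card V) (hsun : IsSun D) :
    ∃ (F₁ : SimpleGraph V) (y : V), F₁ ≤ D ∧
      (D.neighborSet y).ncard = 1 ∧
      F₁.support = {y}ᶜ ∧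
      (∀ c : F₁.ConnectedComponent, (c.supp).Nontrivial →
        IsPathOn (F₁.induce c.supp) 4 ∨ IsPathOn (F₁.induce c.supp) 5) ∧
      (∀ z : V, D.Adj y z → (F₁.neighborSet z).ncard = 2) := by
  classical
  obtain hV | ⟨hV, -⟩ | ⟨R, p, hR, hpend, hpendant⟩ := hsun
  · omega
  · omega
  have : Finite V := Nat.finite_of_card_ne_zero (by omega)
  have hcardR : Nat.card V = 2 * Nat.card R := by
    rw [← Nat.card_congr (Equiv.Set.sumCompl R), Nat.card_sum, Nat.card_congr p.symm, two_mul]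
  have : Nontrivial R := Finite.one_lt_card_iff_nontrivial.1 (by omega)
  obtain ⟨x⟩ : Nonempty R := inferInstance
  obtain ⟨u, hxu⟩ := hR.exists_adj x
  obtain ⟨M⟩ := hR.nonempty_matchingInvolution u
  let _ : LinearOrder R := WellOrderingRel.isWellOrder.linearOrder
  have hy : D.neighborSet (p x) = {(x : V)} := by
    ext z
    simpa using hpendant (p x) z
  refine ⟨sunPacking p M hxu, p x, sunPacking_le p M hxu hpend, by rw [hy, ncard_singleton],
    support_sunPacking p M hxu, isPathOn_sunPacking p M hxu, fun z hz => ?_⟩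
  rw [← mem_neighborSet, hy, mem_singleton_iff] at hz
  exact hz ▸ ncard_neighborSet_sunPacking p M hxu

/-- Claim 1(1): a sun `D` on at least 3 vertices has a `{P₄,P₅}`-packing `F₁` covering all
of `D` except a single vertex `y` of degree one in `D`, such that the neighbor of `y` in
`D` has degree 2 in `F₁`. -/
theorem sun_P4P5_packing {V : Type*} [Fintype V] (D : SimpleGraph V)
    (hcard : 3 ≤ Nat.card V) (hsun : IsSun D) :
    ∃ (F₁ : SimpleGraph V) (y : V), F₁ ≤ D ∧
      (D.neighborSet y).ncard = 1 ∧
      F₁.support = {y}ᶜ ∧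
      (∀ c : F₁.ConnectedComponent, (c.supp).Nontrivial →
        IsPathOn (F₁.induce c.supp) 4 ∨ IsPathOn (F₁.induce c.supp) 5) ∧
      (∀ z : V, D.Adj y z → (F₁.neighborSet z).ncard = 2) :=
  sun_P4P5_packing_general D hcard hsun
end

section
/- Let D be a sun on at least 3 vertices with core R, and let w be any vertex of R. Then D has a subgraph F₂ each of whose components is a path on 4 vertices, such that F₂ covers every vertex of D except w and the pendant of w. -/
/-!
Factor-criticality of the core gives a perfect matching `M` of `R - w`. Every edge `ab` of `M`
extends through the two pendants to the path `p(a) a b p(b)` on four vertices; these paths are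
pairwise vertex-disjoint, have no edges between them, and cover every vertex except `w` and
`p(w)`.
-/

namespace SimpleGraph

variable {V W : Type*}

theorem ConnectedComponent.supp_subset_support_of_nontrivial {G : SimpleGraph V}
    {c : G.ConnectedComponent} (hc : c.supp.Nontrivial) : c.supp ⊆ G.support := by
  intro v hv
  obtain ⟨u, hu, huv⟩ := hc.exists_ne v
  exact mem_support_of_reachable huv.symm (ConnectedComponent.exact (hv.trans hu.symm))

theorem Embedding.supp_connectedComponentMk_eq_range {G : SimpleGraph V} {H : SimpleGraph W}
    (φ : H ↪g G) (hH : H.Preconnected)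
    (hclosed : ∀ x y, G.Adj x y → x ∈ Set.range φ → y ∈ Set.range φ) (w : W) :
    (G.connectedComponentMk (φ w)).supp = Set.range φ := by
  have hwalk : ∀ {x y} (q : G.Walk x y), x ∈ Set.range φ → y ∈ Set.range φ := by
    intro x y q
    induction q with
    | nil => exact id
    | cons h _ ih => exact fun hx => ih (hclosed _ _ h hx)
  ext v
  rw [ConnectedComponent.mem_supp_iff, ConnectedComponent.eq]
  constructor
  · rintro ⟨q⟩
    exact hwalk q.reverse ⟨w, rfl⟩
  · rintro ⟨u, rfl⟩
    exact (hH u w).map φ.toHom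

theorem Embedding.nonempty_induce_supp_iso {G : SimpleGraph V} {H : SimpleGraph W}
    (φ : H ↪g G) (hH : H.Preconnected)
    (hclosed : ∀ x y, G.Adj x y → x ∈ Set.range φ → y ∈ Set.range φ) (w : W) :
    Nonempty (G.induce (G.connectedComponentMk (φ w)).supp ≃g H) := by
  rw [φ.supp_connectedComponentMk_eq_range hH hclosed]
  exact ⟨φ.isoInduceRange.symm⟩

namespace Subgraph.IsPerfectMatching

variable {G : SimpleGraph V} {M : G.Subgraph} (hM : M.IsPerfectMatching)

noncomputable def mate (v : V) : V := (hM.1 (hM.2 v)).choose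

theorem adj_mate (v : V) : M.Adj v (hM.mate v) := (hM.1 (hM.2 v)).choose_spec.1

theorem mate_mate (v : V) : hM.mate (hM.mate v) = v :=
  hM.1.eq_of_adj_left (hM.adj_mate _) (hM.adj_mate v).symm

theorem mate_ne (v : V) : hM.mate v ≠ v := (M.adj_sub (hM.adj_mate v)).ne.symm

end Subgraph.IsPerfectMatching

end SimpleGraph

open SimpleGraph

structure MatchedPendants (α V : Type*) where
  core : α ↪ V
  pendant : α ↪ V
  mate : α → α
  core_ne_pendant : ∀ a b, core a ≠ pendant b
  mate_mate : ∀ a, mate (mate a) = a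
  mate_ne : ∀ a, mate a ≠ a

namespace MatchedPendants

variable {α V : Type*} (S : MatchedPendants α V)

def graph : SimpleGraph V where
  Adj x y := ∃ a, (x = S.core a ∧ y = S.core (S.mate a)) ∨ (x = S.core a ∧ y = S.pendant a) ∨
    (x = S.pendant a ∧ y = S.core a)
  symm := by
    constructor
    rintro x y ⟨a, ⟨rfl, rfl⟩ | ⟨rfl, rfl⟩ | ⟨rfl, rfl⟩⟩
    · exact ⟨S.mate a, Or.inl ⟨rfl, by rw [S.mate_mate]⟩⟩
    · exact ⟨a, Or.inr (Or.inr ⟨rfl, rfl⟩)⟩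
    · exact ⟨a, Or.inr (Or.inl ⟨rfl, rfl⟩)⟩
  loopless := by
    constructor
    rintro x ⟨a, ⟨rfl, h⟩ | ⟨rfl, h⟩ | ⟨rfl, h⟩⟩
    · exact S.mate_ne a (S.core.injective h.symm)
    · exact S.core_ne_pendant a a h
    · exact S.core_ne_pendant a a h.symm

theorem adj_core_iff (a : α) (x : V) :
    S.graph.Adj (S.core a) x ↔ x = S.core (S.mate a) ∨ x = S.pendant a := by
  simp [graph, S.core_ne_pendant, exists_or]

theorem adj_pendant_iff (a : α) (x : V) : S.graph.Adj (S.pendant a) x ↔ x = S.core a := by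
  simp [graph, (S.core_ne_pendant _ _).symm, exists_or]

theorem support_graph : S.graph.support = Set.range S.core ∪ Set.range S.pendant := by
  ext x
  constructor
  · rintro ⟨y, a, ⟨rfl, -⟩ | ⟨rfl, -⟩ | ⟨rfl, -⟩⟩
    exacts [Or.inl ⟨a, rfl⟩, Or.inl ⟨a, rfl⟩, Or.inr ⟨a, rfl⟩]
  · rintro (⟨a, rfl⟩ | ⟨a, rfl⟩)
    exacts [⟨S.pendant a, (S.adj_core_iff a _).2 (Or.inr rfl)⟩,
      ⟨S.core a, (S.adj_pendant_iff a _).2 rfl⟩]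

theorem graph_le {G : SimpleGraph V} (hmate : ∀ a, G.Adj (S.core a) (S.core (S.mate a)))
    (hpendant : ∀ a, G.Adj (S.core a) (S.pendant a)) : S.graph ≤ G := by
  rintro x y ⟨a, ⟨rfl, rfl⟩ | ⟨rfl, rfl⟩ | ⟨rfl, rfl⟩⟩
  exacts [hmate a, hpendant a, (hpendant a).symm]

def pathVertices (a : α) : Fin 4 → V :=
  ![S.pendant a, S.core a, S.core (S.mate a), S.pendant (S.mate a)]

def pathEmbedding (a : α) : pathGraph 4 ↪g S.graph where
  toFun := S.pathVertices a
  inj' := by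
    intro i j
    fin_cases i <;> fin_cases j <;>
      simp [pathVertices, S.core_ne_pendant, (S.core_ne_pendant _ _).symm, S.mate_ne,
        (S.mate_ne _).symm]
  map_rel_iff' := by
    intro i j
    change S.graph.Adj (S.pathVertices a i) (S.pathVertices a j) ↔ _
    fin_cases i <;> fin_cases j <;>
      simp [pathVertices, adj_core_iff, adj_pendant_iff, pathGraph_adj, S.core_ne_pendant,
        (S.core_ne_pendant _ _).symm, S.mate_ne, (S.mate_ne _).symm, S.mate_mate]

theorem range_pathEmbedding (a : α) : Set.range (S.pathEmbedding a) =
    {S.pendant a, S.core a, S.core (S.mate a), S.pendant (S.mate a)} := by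
  change Set.range (S.pathVertices a) = _
  simp only [pathVertices, Matrix.range_cons, Matrix.range_empty, Set.union_empty,
    Set.singleton_union]

theorem mem_range_pathEmbedding_of_adj (a : α) {x y : V} (hxy : S.graph.Adj x y)
    (hx : x ∈ Set.range (S.pathEmbedding a)) : y ∈ Set.range (S.pathEmbedding a) := by
  rw [range_pathEmbedding] at hx ⊢
  rcases hx with rfl | rfl | rfl | rfl
  all_goals
    simp only [adj_core_iff, adj_pendant_iff, S.mate_mate] at hxy
    aesop

theorem isPathOn_induce_supp (c : S.graph.ConnectedComponent) (hc : c.supp.Nontrivial) :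
    IsPathOn (S.graph.induce c.supp) 4 := by
  obtain ⟨x, hx⟩ := hc.nonempty
  have hx' := ConnectedComponent.supp_subset_support_of_nontrivial hc hx
  rw [support_graph] at hx'
  obtain ⟨a, i, rfl⟩ : ∃ a i, S.pathEmbedding a i = x := by
    rcases hx' with ⟨a, rfl⟩ | ⟨a, rfl⟩
    exacts [⟨a, 1, rfl⟩, ⟨a, 0, rfl⟩]
  rw [ConnectedComponent.mem_supp_iff] at hx
  subst hx
  exact (S.pathEmbedding a).nonempty_induce_supp_iso (pathGraph_preconnected 4)
    (fun _ _ => S.mem_range_pathEmbedding_of_adj a) i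

end MatchedPendants

theorem range_val_union_range_equiv {V : Type*} {R : Set V} (p : R ≃ (Rᶜ : Set V)) (w : R) :
    (Set.range fun a : {v : R | v ≠ w} => (a.1 : V)) ∪
      (Set.range fun a : {v : R | v ≠ w} => (p a.1 : V)) = {(w : V), (p w : V)}ᶜ := by
  ext x
  constructor
  · rintro (⟨a, rfl⟩ | ⟨a, rfl⟩) (h | h) <;> dsimp only at h
    · exact a.2 (Subtype.ext h)
    · exact (p w).2 (h ▸ a.1.2)
    · exact (p a.1).2 (h ▸ w.2)
    · exact a.2 (p.injective (Subtype.ext h))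
  · intro hx
    simp only [Set.mem_compl_iff, Set.mem_insert_iff, Set.mem_singleton_iff, not_or] at hx
    by_cases hxR : x ∈ R
    · exact Or.inl ⟨⟨⟨x, hxR⟩, fun h => hx.1 (congrArg Subtype.val h)⟩, rfl⟩
    · refine Or.inr ⟨⟨p.symm ⟨x, hxR⟩, fun h => hx.2 ?_⟩, by simp⟩
      rw [← h, Equiv.apply_symm_apply]

theorem sun_P4_packing_general {V : Type*} (D : SimpleGraph V)
    (R : Set V) (p : R ≃ (Rᶜ : Set V))
    (hfc : IsFactorCritical (D.induce R))
    (hadj : ∀ v : R, D.Adj (↑v) (↑(p v)))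
    (w : R) :
    ∃ F₂ : SimpleGraph V, F₂ ≤ D ∧
      F₂.support = ({(↑w : V), (↑(p w) : V)} : Set V)ᶜ ∧
      ∀ c : F₂.ConnectedComponent, (c.supp).Nontrivial →
        IsPathOn (F₂.induce c.supp) 4 := by
  obtain ⟨M, hM⟩ := hfc w
  let S : MatchedPendants {v : R | v ≠ w} V :=
    { core := ⟨fun a => a.1, Subtype.val_injective.comp Subtype.val_injective⟩
      pendant := ⟨fun a => p a.1,
        Subtype.val_injective.comp (p.injective.comp Subtype.val_injective)⟩
      mate := hM.mate
      core_ne_pendant := fun a b h => (p b.1).2 ((show (a.1 : V) = p b.1 from h) ▸ a.1.2)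
      mate_mate := hM.mate_mate
      mate_ne := hM.mate_ne }
  refine ⟨S.graph, S.graph_le (fun a => M.adj_sub (hM.adj_mate a)) (fun a => hadj a.1), ?_,
    S.isPathOn_induce_supp⟩
  rw [S.support_graph]
  exact range_val_union_range_equiv p w

/-- Claim 1(2): let `D` be a sun on at least 3 vertices with core `R` (pendant bijection
`p : R ≃ Rᶜ`), and let `w` be any vertex of the core. Then `D` has a `{P₄}`-packing `F₂`
covering every vertex of `D` except `w` and its pendant `p w`. -/
theorem sun_P4_packing {V : Type*} [Fintype V] (D : SimpleGraph V)
    (hcard : 3 ≤ Nat.card V)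
    (R : Set V) (p : R ≃ (Rᶜ : Set V))
    (hfc : IsFactorCritical (D.induce R))
    (hadj : ∀ v : R, D.Adj (↑v) (↑(p v)))
    (hpend : ∀ u : (Rᶜ : Set V), ∀ x : V, D.Adj (↑u) x ↔ x = ↑(p.symm u))
    (w : R) :
    ∃ F₂ : SimpleGraph V, F₂ ≤ D ∧
      F₂.support = ({(↑w : V), (↑(p w) : V)} : Set V)ᶜ ∧
      ∀ c : F₂.ConnectedComponent, (c.supp).Nontrivial →
        IsPathOn (F₂.induce c.supp) 4 :=
  sun_P4_packing_general D R p hfc hadj w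
end

section
/- Let G be a finite simple graph and let S ⊆ V(G) be a set attaining the maximum of sun(G − S') − 2|S'| over all S' ⊆ V(G). Then for every subset S₁ ⊆ S, the number of connected components of G − S that contain a vertex adjacent in G to some vertex of S₁ is at least 2|S₁|. -/
/-!
A sun component of `G − S` that has no neighbour in `S₁` is still a sun component of
`G − (S \ S₁)`, and distinct such components stay distinct. Hence
`sun(G − S) ≤ sun(G − (S \ S₁)) + #(components of G − S touching S₁)`, while maximality of `S`
tested against `S \ S₁` gives `sun(G − (S \ S₁)) + 2|S₁| ≤ sun(G − S)`.
-/

namespace SimpleGraph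

variable {V W : Type*} {G : SimpleGraph V} {G' : SimpleGraph W}

noncomputable def Embedding.induceImage (f : G ↪g G') (A : Set V) :
    G.induce A ≃g G'.induce (f '' A) where
  toEquiv := Equiv.Set.image f A f.injective
  map_rel_iff' := by simp

lemma Iso.exists_isPerfectMatching (e : G ≃g G') (h : ∃ M : G.Subgraph, M.IsPerfectMatching) :
    ∃ M : G'.Subgraph, M.IsPerfectMatching := by
  obtain ⟨M, hM, hspan⟩ := h
  exact ⟨M.map e.toHom, hM.map e.toHom e.injective, fun v => ⟨e.symm v, hspan _, by simp⟩⟩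

lemma Iso.isFactorCritical (e : G ≃g G') (h : IsFactorCritical G) : IsFactorCritical G' := by
  intro x
  refine (e.induce (s := {y | y ≠ e.symm x}) (Equiv.bijOn _ fun y => ?_)).exists_isPerfectMatching
    (h (e.symm x))
  simp [RelIso.eq_symm_apply, eq_comm]

lemma Iso.isSun (e : G ≃g G') (h : IsSun G) : IsSun G' := by
  rcases h with hcard | ⟨hcard, hadj⟩ | ⟨R, p, hR, hpendant, hleaf⟩
  · exact Or.inl (Nat.card_congr e.toEquiv.symm ▸ hcard)
  · refine Or.inr (Or.inl ⟨Nat.card_congr e.toEquiv.symm ▸ hcard, fun u v huv => ?_⟩)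
    exact e.symm.map_rel_iff.mp (hadj _ _ (e.symm.injective.ne huv))
  · let eR : R ≃ ↥(e.symm ⁻¹' R) := e.toEquiv.subtypeEquiv fun v => by simp
    let eRc : ↥Rᶜ ≃ ↥(e.symm ⁻¹' R)ᶜ := e.toEquiv.subtypeEquiv fun v => by simp
    refine Or.inr (Or.inr ⟨e.symm ⁻¹' R, eR.symm.trans (p.trans eRc), ?_, fun v => ?_, ?_⟩)
    · exact (e.induce (Equiv.bijOn _ fun v => by simp)).isFactorCritical hR
    · convert e.map_adj_iff.mpr (hpendant (eR.symm v)) using 2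
      · exact (e.apply_symm_apply _).symm
      · rfl
    · intro u x
      rw [← e.symm.map_adj_iff]
      convert hleaf (eRc.symm u) (e.symm x) using 1
      · rfl
      · exact e.toEquiv.symm_apply_eq.symm

end SimpleGraph

namespace SimpleGraph.ConnectedComponent

variable {V : Type*} {G : SimpleGraph V} {s t : Set V}

lemma supp_map_induceHomOfLE (hst : s ⊆ t) {c : (G.induce s).ConnectedComponent}
    (hc : ∀ v ∈ c.supp, ∀ w ∈ t, G.Adj v w → w ∈ s) :
    (c.map (G.induceHomOfLE hst).toHom).supp = Set.inclusion hst '' c.supp := by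
  have step : ∀ u w : t, (G.induce t).Adj u w →
      u ∈ Set.inclusion hst '' c.supp → w ∈ Set.inclusion hst '' c.supp := by
    rintro u w huw ⟨v, hv, rfl⟩
    have hw : (w : V) ∈ s := hc v hv w w.2 huw
    exact ⟨⟨w, hw⟩, c.mem_supp_of_adj_mem_supp hv huw, rfl⟩
  obtain ⟨v₀, rfl⟩ := c.exists_rep
  ext w
  simp only [mem_supp_iff]
  constructor
  · intro hw
    have hr := (ConnectedComponent.exact hw).symm
    rw [reachable_eq_reflTransGen] at hr
    clear hw
    induction hr with
    | refl => exact ⟨v₀, rfl, rfl⟩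
    | tail _ huw ih => exact step _ _ huw ih
  · rintro ⟨v, hv, rfl⟩
    exact ConnectedComponent.sound
      ((ConnectedComponent.exact hv).map (G.induceHomOfLE hst).toHom)

lemma injOn_map_induceHomOfLE (hst : s ⊆ t) :
    Set.InjOn (·.map (G.induceHomOfLE hst).toHom)
      {c : (G.induce s).ConnectedComponent | ∀ v ∈ c.supp, ∀ w ∈ t, G.Adj v w → w ∈ s} := by
  intro c₁ hc₁ c₂ hc₂ hmap
  apply supp_injective
  apply Set.image_injective.mpr (Set.inclusion_injective hst)
  rw [← supp_map_induceHomOfLE hst hc₁, ← supp_map_induceHomOfLE hst hc₂]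
  exact congrArg supp hmap

end SimpleGraph.ConnectedComponent

open SimpleGraph

lemma sunCount_le_sunCount_sdiff_add {V : Type*} [Fintype V] (G : SimpleGraph V) (S S₁ : Set V) :
    sunCount G S ≤ sunCount G (S \ S₁) + Nat.card {c : (G.induce Sᶜ).ConnectedComponent //
      ∃ v : ↥(Sᶜ), v ∈ c.supp ∧ ∃ s ∈ S₁, G.Adj (↑v) s} := by
  have hST : Sᶜ ⊆ (S \ S₁)ᶜ := Set.compl_subset_compl.mpr Set.sdiff_subset
  set suns := {c : (G.induce Sᶜ).ConnectedComponent | IsSun ((G.induce Sᶜ).induce c.supp)}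
  set touching := {c : (G.induce Sᶜ).ConnectedComponent |
    ∃ v : ↥(Sᶜ), v ∈ c.supp ∧ ∃ s ∈ S₁, G.Adj (↑v) s}
  have hclosed : ∀ c ∉ touching, ∀ v ∈ c.supp, ∀ w ∈ (S \ S₁)ᶜ, G.Adj v w → w ∈ Sᶜ :=
    fun c hc v hv w hw hvw hwS => hc ⟨v, hv, w, by_contra fun hwS₁ => hw ⟨hwS, hwS₁⟩, hvw⟩
  have hsuns : (suns \ touching).ncard ≤ sunCount G (S \ S₁) := by
    refine Set.ncard_le_ncard_of_injOn (·.map (G.induceHomOfLE hST).toHom) ?_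
      ((ConnectedComponent.injOn_map_induceHomOfLE hST).mono fun c hc => hclosed c hc.2)
    rintro c ⟨hsun, hc⟩
    change IsSun _
    rw [ConnectedComponent.supp_map_induceHomOfLE hST (hclosed c hc)]
    exact ((G.induceHomOfLE hST).induceImage c.supp).isSun hsun
  calc sunCount G S = suns.ncard := Nat.card_coe_set_eq suns
    _ ≤ (suns \ touching).ncard + touching.ncard :=
      Set.ncard_le_ncard_sdiff_add_ncard suns touching
    _ ≤ sunCount G (S \ S₁) + touching.ncard := by gcongr
    _ = _ := congrArg _ (Nat.card_coe_set_eq touching).symm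

/-- Claim 3 (Hall-type condition): if `S` maximizes `sun(G − S') − 2|S'|`, then for every
`S₁ ⊆ S`, at least `2|S₁|` components of `G − S` contain a vertex adjacent in `G` to some
vertex of `S₁`. -/
theorem neighborhood_condition {V : Type*} [Fintype V] (G : SimpleGraph V) (S : Set V)
    (hmax : ∀ S' : Set V,
      (sunCount G S' : ℤ) - 2 * S'.ncard ≤ (sunCount G S : ℤ) - 2 * S.ncard)
    (S₁ : Set V) (hS₁ : S₁ ⊆ S) :
    2 * S₁.ncard ≤ Nat.card {c : (G.induce Sᶜ).ConnectedComponent //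
      ∃ v : ↥(Sᶜ), v ∈ c.supp ∧ ∃ s ∈ S₁, G.Adj (↑v) s} := by
  have hsplit := sunCount_le_sunCount_sdiff_add G S S₁
  have hmax_sdiff := hmax (S \ S₁)
  rw [Set.cast_ncard_sdiff hS₁ S.toFinite] at hmax_sdiff
  omega
end

section
/- Let B be a finite bipartite graph with partite sets S and W, and let Δ be a positive integer such that every vertex of S has degree at most Δ in B. Let U = {u ∈ W : d_B(u) ≥ ⌈Δ/2⌉}. If B has a subgraph F₁ each of whose components is a path on 3 vertices whose middle vertex lies in S, with F₁ covering every vertex of S, then B has such a subgraph F (components are paths on 3 vertices centered in S, covering all of S) that additionally covers every vertex of U. -/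
/-- `F` is a `{P₃}`-packing of `B` centered in `S` and covering `S`: `F ≤ B`, every vertex
of `S` has degree 2 in `F`, and every covered vertex outside `S` (i.e. in the other partite
set) has degree 1 in `F`. Since `B` is bipartite with parts `S` and `W`, the components of
such an `F` are exactly paths on 3 vertices with middle vertex in `S`. -/
def IsP3PackingCovering {V : Type*} (B : SimpleGraph V) (S : Set V) (F : SimpleGraph V) :
    Prop :=
  F ≤ B ∧ (∀ s ∈ S, (F.neighborSet s).ncard = 2) ∧
    (∀ u : V, u ∉ S → u ∈ F.support → (F.neighborSet u).ncard = 1)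

/-!
Take a packing `F` covering `S` and as many vertices of `U` as possible, and suppose `u ∈ U` is
uncovered. Along an alternating walk `u –B– s₁ –F– w₁ –B– s₂ –F– w₂ ⋯` we may replace the edge
`s₁w₁` of `F` by `s₁u`, which covers `u` and uncovers only `w₁`, and continue from `w₁`; along a
shortest such walk ending outside `U` this covers more of `U`. Hence the set `T` of vertices
reachable from `u` by such walks lies in `U`. Let `R ⊆ S` be the `B`-neighbours of `T`: the
`F`-neighbours of `R` are `2|R|` vertices of `T` other than `u`, so `|T| > 2|R|`, whereas counting
the edges of `B` between `T` and `R` gives `|T| ⌈Δ/2⌉ ≤ |R| Δ`.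
-/

open Finset

namespace SimpleGraph

section DegreeCounting

variable {V : Type*} [Fintype V] (G : SimpleGraph V) [DecidableRel G.Adj]

theorem sum_degree_le_sum_degree_of_neighborFinset_subset {T R : Finset V}
    (hN : ∀ t ∈ T, G.neighborFinset t ⊆ R) : ∑ t ∈ T, G.degree t ≤ ∑ r ∈ R, G.degree r :=
  calc ∑ t ∈ T, G.degree t = ∑ t ∈ T, #(R.bipartiteAbove G.Adj t) := by
        refine sum_congr rfl fun t ht => ?_
        rw [← card_neighborFinset_eq_degree]
        congr 1
        ext r
        simpa [bipartiteAbove] using fun h => hN t ht ((mem_neighborFinset ..).2 h)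
    _ = ∑ r ∈ R, #(T.bipartiteBelow G.Adj r) :=
        sum_card_bipartiteAbove_eq_sum_card_bipartiteBelow _
    _ ≤ ∑ r ∈ R, G.degree r := by
        refine sum_le_sum fun r _ => ?_
        rw [← card_neighborFinset_eq_degree]
        exact card_le_card fun t ht => (mem_neighborFinset ..).2 (mem_filter.1 ht).2.symm

theorem card_le_two_mul_card_of_neighborFinset_subset {T R : Finset V} {Δ : ℕ} (hΔ : 0 < Δ)
    (hT : ∀ t ∈ T, Δ ≤ 2 * G.degree t) (hR : ∀ r ∈ R, G.degree r ≤ Δ)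
    (hN : ∀ t ∈ T, G.neighborFinset t ⊆ R) : #T ≤ 2 * #R := by
  have := calc #T * Δ ≤ ∑ t ∈ T, 2 * G.degree t := card_nsmul_le_sum _ _ _ hT
    _ = 2 * ∑ t ∈ T, G.degree t := (mul_sum ..).symm
    _ ≤ 2 * ∑ r ∈ R, G.degree r :=
        Nat.mul_le_mul_left 2 (G.sum_degree_le_sum_degree_of_neighborFinset_subset hN)
    _ ≤ 2 * (#R * Δ) := Nat.mul_le_mul_left 2 (sum_le_card_nsmul _ _ _ hR)
    _ = 2 * #R * Δ := (mul_assoc ..).symm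
  exact Nat.le_of_mul_le_mul_right this hΔ

end DegreeCounting

section ReplaceEdge

variable {V : Type*}

def replaceEdge (F : SimpleGraph V) (s w' w : V) : SimpleGraph V :=
  F.deleteEdges {s(s, w')} ⊔ edge s w

variable (F : SimpleGraph V) {s w' w : V}

theorem neighborSet_replaceEdge_of_ne {x : V} (hs : x ≠ s) (hw' : x ≠ w') (hw : x ≠ w) :
    (F.replaceEdge s w' w).neighborSet x = F.neighborSet x := by
  ext y; simp [replaceEdge, edge_adj]; grind

theorem neighborSet_replaceEdge_center (hsw : s ≠ w) :
    (F.replaceEdge s w' w).neighborSet s = insert w (F.neighborSet s \ {w'}) := by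
  ext y; simp [replaceEdge, edge_adj]; grind

theorem neighborSet_replaceEdge_new (hsw : s ≠ w) (hw'w : w' ≠ w) :
    (F.replaceEdge s w' w).neighborSet w = insert s (F.neighborSet w) := by
  ext y; simp [replaceEdge, edge_adj]; grind

theorem neighborSet_replaceEdge_old (hsw' : s ≠ w') (hw'w : w' ≠ w) :
    (F.replaceEdge s w' w).neighborSet w' = F.neighborSet w' \ {s} := by
  ext y; simp [replaceEdge, edge_adj]; grind

end ReplaceEdge

end SimpleGraph

open SimpleGraph

namespace IsP3PackingCovering

variable {V : Type*} {B F : SimpleGraph V} {S : Set V}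

theorem neighborSet_eq_singleton (hF : IsP3PackingCovering B S F) {u v : V} (hu : u ∉ S)
    (huv : F.Adj u v) : F.neighborSet u = {v} := by
  obtain ⟨a, ha⟩ := Set.ncard_eq_one.1 (hF.2.2 u hu (F.mem_support.2 ⟨v, huv⟩))
  rwa [ha, Set.singleton_eq_singleton_iff, eq_comm, ← Set.mem_singleton_iff, ← ha]

theorem notMem_of_adj (hF : IsP3PackingCovering B S F) (hS : B.IsIndepSet S) {s y : V}
    (hs : s ∈ S) (hsy : F.Adj s y) : y ∉ S :=
  fun hy => hS hs hy hsy.ne (hF.1 hsy)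

theorem card_biUnion_neighborFinset [Fintype V] [DecidableEq V] [DecidableRel F.Adj]
    (hF : IsP3PackingCovering B S F) (hS : B.IsIndepSet S) {R : Finset V} (hR : ↑R ⊆ S) :
    #(R.biUnion (F.neighborFinset ·)) = 2 * #R := by
  have hdisj : (R : Set V).PairwiseDisjoint (F.neighborFinset ·) := by
    refine fun r₁ hr₁ r₂ hr₂ hne => Finset.disjoint_left.2 fun y hy₁ hy₂ => hne ?_
    rw [mem_neighborFinset] at hy₁ hy₂
    have hN := hF.neighborSet_eq_singleton (hF.notMem_of_adj hS (hR hr₁) hy₁) hy₁.symm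
    have hr₂ : r₂ ∈ F.neighborSet y := hy₂.symm
    rw [hN] at hr₂
    exact hr₂.symm
  rw [card_biUnion hdisj, sum_const_nat fun r hr => ?_, mul_comm]
  rw [neighborFinset_def, ← Set.ncard_eq_toFinset_card', hF.2.1 r (hR hr)]

variable {s w' w : V}

theorem neighborSet_replaceEdge (hF : IsP3PackingCovering B S F) (hs : s ∈ S) (hw' : w' ∉ S)
    (hw : w ∉ S) (hsw' : F.Adj s w') (hwF : w ∉ F.support) :
    (F.replaceEdge s w' w).neighborSet s = insert w (F.neighborSet s \ {w'}) ∧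
    (F.replaceEdge s w' w).neighborSet w' = ∅ ∧
    (F.replaceEdge s w' w).neighborSet w = {s} := by
  have hsw : s ≠ w := by rintro rfl; exact hw hs
  have hw'w : w' ≠ w := by rintro rfl; exact hwF (F.mem_support.2 ⟨s, hsw'.symm⟩)
  refine ⟨F.neighborSet_replaceEdge_center hsw, ?_, ?_⟩
  · rw [F.neighborSet_replaceEdge_old hsw'.ne hw'w, hF.neighborSet_eq_singleton hw' hsw'.symm,
      Set.sdiff_self]
  · have hNw : F.neighborSet w = ∅ :=
      Set.eq_empty_of_forall_notMem fun y hy => hwF (F.mem_support.2 ⟨y, hy⟩)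
    rw [F.neighborSet_replaceEdge_new hsw hw'w, hNw, insert_empty_eq]

theorem support_replaceEdge (hF : IsP3PackingCovering B S F) (hs : s ∈ S) (hw' : w' ∉ S)
    (hw : w ∉ S) (hsw' : F.Adj s w') (hwF : w ∉ F.support) :
    (F.replaceEdge s w' w).support = insert w (F.support \ {w'}) := by
  obtain ⟨hNs, hNw', hNw⟩ := hF.neighborSet_replaceEdge hs hw' hw hsw' hwF
  have hsupp (G : SimpleGraph V) (x : V) : x ∈ G.support ↔ (G.neighborSet x).Nonempty :=
    G.mem_support
  ext x
  rw [hsupp, Set.mem_insert_iff, Set.mem_sdiff, Set.mem_singleton_iff, hsupp]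
  by_cases hxs : x = s
  · subst hxs
    rw [hNs]
    exact iff_of_true (Set.insert_nonempty _ _) (Or.inr ⟨⟨w', hsw'⟩, hsw'.ne⟩)
  by_cases hxw : x = w
  · subst hxw
    rw [hNw]
    exact iff_of_true (Set.singleton_nonempty _) (Or.inl rfl)
  by_cases hxw' : x = w'
  · subst hxw'
    rw [hNw']
    simp [hxw]
  rw [F.neighborSet_replaceEdge_of_ne hxs hxw' hxw]
  tauto

theorem replaceEdge (hF : IsP3PackingCovering B S F) (hs : s ∈ S) (hw' : w' ∉ S) (hw : w ∉ S)
    (hsw' : F.Adj s w') (hwF : w ∉ F.support) (hws : B.Adj w s) :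
    IsP3PackingCovering B S (F.replaceEdge s w' w) := by
  obtain ⟨hNs, -, hNw⟩ := hF.neighborSet_replaceEdge hs hw' hw hsw' hwF
  refine ⟨sup_le ((F.deleteEdges_le _).trans hF.1) ((edge_le_iff _).2 (Or.inr hws.symm)),
    fun x hx => ?_, fun x hx hxF => ?_⟩
  · by_cases hxs : x = s
    · subst hxs
      have hfin : (F.neighborSet x).Finite := Set.finite_of_ncard_ne_zero (by simp [hF.2.1 x hx])
      rw [hNs, Set.ncard_insert_of_notMem (fun h => hwF (F.mem_support.2 ⟨x, h.1.symm⟩))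
        hfin.sdiff, Set.ncard_sdiff_singleton_of_mem (s := F.neighborSet x) hsw', hF.2.1 x hx]
    · rw [F.neighborSet_replaceEdge_of_ne hxs (by grind) (by grind), hF.2.1 x hx]
  · rw [hF.support_replaceEdge hs hw' hw hsw' hwF] at hxF
    obtain rfl | ⟨hxF, hxw'⟩ := hxF
    · rw [hNw, Set.ncard_singleton]
    · rw [F.neighborSet_replaceEdge_of_ne (by grind) hxw' (by grind), hF.2.2 x hx hxF]

end IsP3PackingCovering

section Escape

variable {V : Type*}

def EscapesWithin (B F : SimpleGraph V) (S U : Set V) : ℕ → V → Prop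
  | 0, w => w ∉ U
  | k + 1, w => w ∉ U ∨ ∃ s ∈ S, ∃ w', B.Adj w s ∧ F.Adj s w' ∧ EscapesWithin B F S U k w'

variable {B F F' : SimpleGraph V} {S U : Set V}

theorem EscapesWithin.of_deleteEdges {s w' : V} (hF' : F.deleteEdges {s(s, w')} ≤ F')
    (hw' : w' ∉ S) {m : ℕ} (hmin : ∀ j < m, ¬EscapesWithin B F S U j w') :
    ∀ {j : ℕ}, j ≤ m → ∀ {x : V}, EscapesWithin B F S U j x → EscapesWithin B F' S U j x
  | 0, _, _, hx => hx
  | _ + 1, _, _, .inl hx => .inl hx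
  | j + 1, hj, _, .inr ⟨t, ht, y, hxt, hty, hy⟩ => by
    refine .inr ⟨t, ht, y, hxt, hF' ((deleteEdges_adj ..).2 ⟨hty, fun hdel => ?_⟩),
      of_deleteEdges hF' hw' hmin (by omega) hy⟩
    obtain ⟨rfl, rfl⟩ | ⟨rfl, rfl⟩ := Sym2.eq_iff.1 (Set.mem_singleton_iff.1 hdel)
    · exact hmin j (by omega) hy
    · exact hw' ht

end Escape

namespace IsP3PackingCovering

variable {V : Type*} {B : SimpleGraph V} {S U : Set V}

theorem exists_cover_insert_of_escapesWithin (hS : B.IsIndepSet S) (k : ℕ) :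
    ∀ {F : SimpleGraph V} {w : V}, IsP3PackingCovering B S F → w ∉ F.support →
      EscapesWithin B F S U k w →
      ∃ F' : SimpleGraph V, IsP3PackingCovering B S F' ∧ U ∩ insert w F.support ⊆ F'.support := by
  induction k using Nat.strong_induction_on with
  | _ k ih =>
  intro F w hF hwF hk
  classical
  by_cases hwU : w ∉ U
  · exact ⟨F, hF, fun x ⟨hxU, hx⟩ => hx.resolve_left fun hxw => hwU (hxw ▸ hxU)⟩
  have hex : ∃ m, EscapesWithin B F S U m w := ⟨k, hk⟩
  obtain ⟨m, hm⟩ : ∃ m, Nat.find hex = m + 1 :=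
    Nat.exists_eq_succ_of_ne_zero fun h => hwU (h ▸ Nat.find_spec hex :)
  have hesc := Nat.find_spec hex
  rw [hm] at hesc
  obtain ⟨s, hs, w', hws, hsw', hw'⟩ := hesc.resolve_left hwU
  -- a shortest escape from `w'` never returns through the edge `s w'`, so it survives `replaceEdge`
  have hmin (j : ℕ) (hj : j < m) : ¬EscapesWithin B F S U j w' := fun hj' =>
    Nat.find_min hex (m := j + 1) (by omega)
      (.inr ⟨s, hs, w', hws, hsw', hj'⟩ : EscapesWithin B F S U (j + 1) w)
  have hwS : w ∉ S := fun hw => hS hw hs hws.ne hws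
  have hw'S : w' ∉ S := hF.notMem_of_adj hS hs hsw'
  have hw'w : w' ≠ w := fun h => hwF (h ▸ F.mem_support.2 ⟨s, hsw'.symm⟩)
  have hsupp := hF.support_replaceEdge hs hw'S hwS hsw' hwF
  obtain ⟨F'', hF'', hcov⟩ := ih m (by have := Nat.find_min' hex hk; omega)
    (hF.replaceEdge hs hw'S hwS hsw' hwF hws) (by simp [hsupp, hw'w])
    (EscapesWithin.of_deleteEdges le_sup_left hw'S hmin le_rfl hw')
  refine ⟨F'', hF'', subset_trans ?_ hcov⟩
  rw [hsupp]
  grind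

theorem exists_escapesWithin [Fintype V] [DecidableRel B.Adj] {F : SimpleGraph V}
    (hF : IsP3PackingCovering B S F) (hS : B.IsIndepSet S) {Δ : ℕ} (hΔ : 0 < Δ)
    (hdeg : ∀ s ∈ S, B.degree s ≤ Δ) (hU : ∀ u ∈ U, Δ ≤ 2 * B.degree u ∧ ∀ y, B.Adj u y → y ∈ S)
    {u : V} (hu : u ∉ F.support) : ∃ k, EscapesWithin B F S U k u := by
  classical
  by_contra! hstuck
  set T : Finset V := {t | ∀ k, ¬EscapesWithin B F S U k t}
  set R : Finset V := T.biUnion (B.neighborFinset ·)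
  have hTU (t : V) (ht : t ∈ T) : t ∈ U := not_not.1 ((mem_filter.1 ht).2 0)
  have hRS : ↑R ⊆ S := by
    intro r hr
    obtain ⟨t, ht, htr⟩ := mem_biUnion.1 hr
    exact (hU t (hTU t ht)).2 r ((mem_neighborFinset ..).1 htr)
  have hRT : insert u (R.biUnion (F.neighborFinset ·)) ⊆ T := by
    refine insert_subset (by simpa [T] using hstuck) fun y hy => ?_
    obtain ⟨r, hr, hry⟩ := mem_biUnion.1 hy
    obtain ⟨t, ht, htr⟩ := mem_biUnion.1 hr
    simp only [T, mem_filter, mem_univ, true_and] at ht ⊢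
    exact fun k hk => ht (k + 1) (.inr ⟨r, hRS hr, y, (mem_neighborFinset ..).1 htr,
      (mem_neighborFinset ..).1 hry, hk⟩)
  have hu_notMem : u ∉ R.biUnion (F.neighborFinset ·) := by
    simp only [mem_biUnion, mem_neighborFinset, not_exists, not_and]
    exact fun r _ hru => hu (F.mem_support.2 ⟨r, hru.symm⟩)
  have hlower := card_le_card hRT
  rw [card_insert_of_notMem hu_notMem, hF.card_biUnion_neighborFinset hS hRS] at hlower
  have hupper := B.card_le_two_mul_card_of_neighborFinset_subset hΔ
    (fun t ht => (hU t (hTU t ht)).1) (fun r hr => hdeg r (hRS hr))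
    fun t ht => subset_biUnion_of_mem (B.neighborFinset ·) ht
  omega

end IsP3PackingCovering

theorem p3_packing_covering_U_general {V : Type*} [Fintype V]
    (B : SimpleGraph V) [DecidableRel B.Adj] (S W : Set V)
    (hdisj : Disjoint S W)
    (hbip : ∀ u v : V, B.Adj u v → (u ∈ S ∧ v ∈ W) ∨ (u ∈ W ∧ v ∈ S))
    (Δ : ℕ) (hΔ : 0 < Δ) (hdegS : ∀ s ∈ S, B.degree s ≤ Δ)
    (U : Set V) (hU : U = {u ∈ W | (Δ + 1) / 2 ≤ B.degree u})
    (F₁ : SimpleGraph V) (hF₁ : IsP3PackingCovering B S F₁) :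
    ∃ F : SimpleGraph V, IsP3PackingCovering B S F ∧ U ⊆ F.support := by
  have hS : B.IsIndepSet S := fun x hx y hy _ hxy => by
    rcases hbip x y hxy with h | h
    exacts [hdisj.notMem_of_mem_left hy h.2, hdisj.notMem_of_mem_left hx h.1]
  have hUdeg (u : V) (hu : u ∈ U) : Δ ≤ 2 * B.degree u ∧ ∀ y, B.Adj u y → y ∈ S := by
    rw [hU] at hu
    refine ⟨by have := hu.2; omega, fun y huy => ?_⟩
    rcases hbip u y huy with h | h
    exacts [(hdisj.notMem_of_mem_left h.1 hu.1).elim, h.2]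
  obtain ⟨F, hF, hmax⟩ := Set.exists_max_image {F | IsP3PackingCovering B S F}
    (fun F => (U ∩ F.support).ncard) (Set.toFinite _) ⟨F₁, hF₁⟩
  refine ⟨F, hF, fun u huU => by_contra fun hu => ?_⟩
  obtain ⟨k, hk⟩ := hF.exists_escapesWithin hS hΔ hdegS hUdeg hu
  obtain ⟨F', hF', hcov⟩ := hF.exists_cover_insert_of_escapesWithin hS k hu hk
  have hlt : (U ∩ F.support).ncard < (U ∩ F'.support).ncard :=
    Set.ncard_lt_ncard ((Set.ssubset_insert fun h => hu h.2).trans_le (by grind)) (Set.toFinite _)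
  exact (hmax F' hF').not_gt hlt

/-- If `B` is bipartite with parts `S` and `W`, every vertex of `S` has degree at most `Δ`,
and `U = {u ∈ W : d_B(u) ≥ ⌈Δ/2⌉}`, then the existence of a `{P₃}`-packing (with paths
centered in `S`) covering `S` implies the existence of one covering `S ∪ U`. -/
theorem p3_packing_covering_U {V : Type*} [Fintype V]
    (B : SimpleGraph V) [DecidableRel B.Adj] (S W : Set V)
    (hpart : ∀ v : V, v ∈ S ∨ v ∈ W) (hdisj : Disjoint S W)
    (hbip : ∀ u v : V, B.Adj u v → (u ∈ S ∧ v ∈ W) ∨ (u ∈ W ∧ v ∈ S))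
    (Δ : ℕ) (hΔ : 0 < Δ) (hdegS : ∀ s ∈ S, B.degree s ≤ Δ)
    (U : Set V) (hU : U = {u ∈ W | (Δ + 1) / 2 ≤ B.degree u})
    (F₁ : SimpleGraph V) (hF₁ : IsP3PackingCovering B S F₁) :
    ∃ F : SimpleGraph V, IsP3PackingCovering B S F ∧ U ⊆ F.support :=
  p3_packing_covering_U_general B S W hdisj hbip Δ hΔ hdegS U hU F₁ hF₁
end
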